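/- arXiv:2505.03316 — 4 statements merged into one kernel-verified Lean document; each statement's English description precedes it below -/
import Mathlib

section
/- Let σ = (s_{i,j}) be an N×N symmetric shift matrix with minimal admissible shape μ = (μ_1, …, μ_n) (so σ ≠ 0 and n ≥ 2), and define the matrix σ̇ = (ṡ_{i,j}) by ṡ_{i,j} := s_{i,j} − 1 if exactly one of i, j exceeds N − μ_n (i.e., i ≤ N − μ_n < j or j ≤ N − μ_n < i), and ṡ_{i,j} := s_{i,j} otherwise. Then σ̇ is again a symmetric shift matrix with nonnegative entries, and μ is an admissible shape for σ̇. -/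
/-- The partial sum `μ_(a-1) = μ 1 + ⋯ + μ (a-1)` of a composition. -/
def blockStart {m : ℕ} (μ : Fin m → ℕ) (a : Fin m) : ℕ :=
  ∑ b ∈ Finset.univ.filter (fun b => b < a), μ b

/-- The shift matrix condition `s i j + s j k = s i k` whenever
`|i-j| + |j-k| = |i-k|`. -/
def IsShiftMat {N : ℕ} {α : Type*} [Add α] (s : Fin N → Fin N → α) : Prop :=
  ∀ i j k : Fin N,
    |((i : ℕ) : ℤ) - ((j : ℕ) : ℤ)| + |((j : ℕ) : ℤ) - ((k : ℕ) : ℤ)| =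
      |((i : ℕ) : ℤ) - ((k : ℕ) : ℤ)| →
    s i j + s j k = s i k

/-- Admissibility of a shape `μ` for a matrix `s`: entries vanish whenever both
indices lie in the same `μ`-block. -/
def IsAdmissibleShape {N m : ℕ} {α : Type*} [Zero α]
    (s : Fin N → Fin N → α) (μ : Fin m → ℕ) : Prop :=
  ∀ a : Fin m, ∀ i j : Fin N,
    blockStart μ a ≤ (i : ℕ) → (i : ℕ) < blockStart μ a + μ a →
    blockStart μ a ≤ (j : ℕ) → (j : ℕ) < blockStart μ a + μ a →
    s i j = 0

/-!
The matrix `σ - σ̇` is the `0/1` matrix `cutCrossing K` recording whether `i` and `j` lie on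
different sides of the cut `K = N - μ_n`. Since `K` is a block boundary of `μ`, this matrix is
itself a shift matrix vanishing on every `μ`-block, so `σ̇` inherits the shift property, symmetry
and admissibility from `σ`. Only nonnegativity needs minimality: if `s i j = 0` for some
`i < K ≤ j`, the shift property squeezes `s (K-1) K = 0`, and then the last two blocks of `μ`
merge into an admissible shape of smaller length.
-/

namespace IsShiftMat

variable {N : ℕ} {α : Type*} {s : Fin N → Fin N → α}

theorem add_of_le_of_le [Add α] (hs : IsShiftMat s) {i j k : Fin N} (hij : i ≤ j) (hjk : j ≤ k) :
    s i j + s j k = s i k :=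
  hs i j k (by
    rw [abs_of_nonpos (by omega), abs_of_nonpos (by omega), abs_of_nonpos (by omega)]; ring)

theorem add_of_ge_of_ge [Add α] (hs : IsShiftMat s) {i j k : Fin N} (hij : j ≤ i) (hjk : k ≤ j) :
    s i j + s j k = s i k :=
  hs i j k (by
    rw [abs_of_nonneg (by omega), abs_of_nonneg (by omega), abs_of_nonneg (by omega)]; ring)

theorem le_of_le_of_le {s : Fin N → Fin N → ℕ} (hs : IsShiftMat s) {i i' j' j : Fin N}
    (hi : i ≤ i') (hij : i' ≤ j') (hj : j' ≤ j) : s i' j' ≤ s i j := by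
  have h₁ := hs.add_of_le_of_le hi (hij.trans hj)
  have h₂ := hs.add_of_le_of_le hij hj
  omega

theorem natCast {R : Type*} [AddMonoidWithOne R] {s : Fin N → Fin N → ℕ} (hs : IsShiftMat s) :
    IsShiftMat fun i j => (s i j : R) := by
  intro i j k h
  simp only [← Nat.cast_add, hs i j k h]

theorem sub [SubtractionCommMonoid α] {t : Fin N → Fin N → α} (hs : IsShiftMat s)
    (ht : IsShiftMat t) : IsShiftMat fun i j => s i j - t i j := by
  intro i j k h
  rw [sub_add_sub_comm, hs i j k h, ht i j k h]

end IsShiftMat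

namespace IsAdmissibleShape

variable {N m : ℕ} {μ : Fin m → ℕ}

theorem natCast {R : Type*} [AddMonoidWithOne R] {s : Fin N → Fin N → ℕ}
    (hs : IsAdmissibleShape s μ) : IsAdmissibleShape (fun i j => (s i j : R)) μ := by
  intro a i j hi hi' hj hj'
  simp only [hs a i j hi hi' hj hj', Nat.cast_zero]

theorem sub {α : Type*} [AddGroup α] {s t : Fin N → Fin N → α}
    (hs : IsAdmissibleShape s μ) (ht : IsAdmissibleShape t μ) :
    IsAdmissibleShape (fun i j => s i j - t i j) μ := by
  intro a i j hi hi' hj hj'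
  simp only [hs a i j hi hi' hj hj', ht a i j hi hi' hj hj', sub_self]

end IsAdmissibleShape

section blockStart

variable {m : ℕ}

theorem blockStart_castSucc (μ : Fin (m + 1) → ℕ) (a : Fin m) :
    blockStart μ a.castSucc = blockStart (Fin.init μ) a := by
  simp [blockStart, Finset.sum_filter, Fin.sum_univ_castSucc, Fin.init,
    (Fin.castSucc_lt_last a).not_gt]

theorem blockStart_last (μ : Fin (m + 1) → ℕ) :
    blockStart μ (Fin.last m) = ∑ a : Fin m, μ a.castSucc := by
  simp [blockStart, Finset.sum_filter, Fin.sum_univ_castSucc, Fin.castSucc_lt_last]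

theorem blockStart_last_add (μ : Fin (m + 1) → ℕ) :
    blockStart μ (Fin.last m) + μ (Fin.last m) = ∑ a, μ a := by
  rw [blockStart_last, Fin.sum_univ_castSucc]

theorem blockStart_add_le_of_lt (μ : Fin m → ℕ) {a b : Fin m} (hab : a < b) :
    blockStart μ a + μ a ≤ blockStart μ b := by
  have hsub : insert a (Finset.univ.filter (· < a)) ⊆ Finset.univ.filter (· < b) := by
    intro c hc
    simp only [Finset.mem_insert, Finset.mem_filter, Finset.mem_univ, true_and] at hc ⊢
    rcases hc with rfl | hc
    · exact hab
    · exact hc.trans hab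
  calc blockStart μ a + μ a = ∑ c ∈ insert a (Finset.univ.filter (· < a)), μ c := by
        rw [Finset.sum_insert (by simp), blockStart, add_comm]
    _ ≤ blockStart μ b := Finset.sum_le_sum_of_subset hsub

theorem blockStart_mono (μ : Fin m → ℕ) : Monotone (blockStart μ) := by
  intro a b hab
  rcases hab.lt_or_eq with hab | rfl
  · exact (Nat.le_add_right _ _).trans (blockStart_add_le_of_lt μ hab)
  · rfl

end blockStart

def cutCrossing {N : ℕ} (K : ℕ) (i j : Fin N) : ℤ :=
  if ((i : ℕ) < K ∧ K ≤ (j : ℕ)) ∨ ((j : ℕ) < K ∧ K ≤ (i : ℕ)) then 1 else 0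

theorem cutCrossing_comm {N : ℕ} (K : ℕ) (i j : Fin N) :
    cutCrossing K i j = cutCrossing K j i := by
  simp only [cutCrossing, or_comm]

theorem isShiftMat_cutCrossing (N K : ℕ) : IsShiftMat (cutCrossing (N := N) K) := by
  intro i j k h
  have hbetween : (i ≤ j ∧ j ≤ k) ∨ (k ≤ j ∧ j ≤ i) := by
    rcases abs_cases ((i : ℤ) - j) with ⟨_, _⟩ | ⟨_, _⟩ <;>
    rcases abs_cases ((j : ℤ) - k) with ⟨_, _⟩ | ⟨_, _⟩ <;>
    rcases abs_cases ((i : ℤ) - k) with ⟨_, _⟩ | ⟨_, _⟩ <;> omega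
  simp only [cutCrossing]
  split_ifs <;> omega

theorem isAdmissibleShape_cutCrossing {N m : ℕ} (μ : Fin m → ℕ) (b : Fin m) :
    IsAdmissibleShape (cutCrossing (N := N) (blockStart μ b)) μ := by
  intro a i j hi hi' hj hj'
  have hsides : blockStart μ a + μ a ≤ blockStart μ b ∨ blockStart μ b ≤ blockStart μ a := by
    rcases lt_or_ge a b with hab | hab
    · exact .inl (blockStart_add_le_of_lt μ hab)
    · exact .inr (blockStart_mono μ hab)
  rw [cutCrossing, if_neg (by omega)]

section mergeLast

variable {m : ℕ}

def mergeLast (μ : Fin (m + 2) → ℕ) : Fin (m + 1) → ℕ :=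
  Fin.snoc (fun a : Fin m => μ a.castSucc.castSucc)
    (μ (Fin.last m).castSucc + μ (Fin.last (m + 1)))

theorem mergeLast_pos {μ : Fin (m + 2) → ℕ} (hpos : ∀ a, 0 < μ a) (a : Fin (m + 1)) :
    0 < mergeLast μ a := by
  induction a using Fin.lastCases <;> simp [mergeLast, hpos]

theorem sum_mergeLast (μ : Fin (m + 2) → ℕ) : ∑ a, mergeLast μ a = ∑ a, μ a := by
  simp [mergeLast, Fin.sum_univ_castSucc, add_assoc]

theorem blockStart_mergeLast (μ : Fin (m + 2) → ℕ) (a : Fin (m + 1)) :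
    blockStart (mergeLast μ) a = blockStart μ a.castSucc := by
  induction a using Fin.lastCases with
  | last => simp [blockStart_last, blockStart_castSucc, mergeLast, Fin.init]
  | cast a => simp only [mergeLast, blockStart_castSucc, Fin.init_snoc]; rfl

end mergeLast

theorem isAdmissibleShape_mergeLast {N m : ℕ} {s : Fin N → Fin N → ℕ} {μ : Fin (m + 2) → ℕ}
    (hs : IsShiftMat s) (hadm : IsAdmissibleShape s μ) {P Q : Fin N}
    (hP : (P : ℕ) + 1 = blockStart μ (Fin.last (m + 1)))
    (hQ : (Q : ℕ) = blockStart μ (Fin.last (m + 1))) (hPQ : s P Q = 0) (hQP : s Q P = 0) :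
    IsAdmissibleShape s (mergeLast μ) := by
  intro a i j hi hi' hj hj'
  rw [blockStart_mergeLast] at hi hi' hj hj'
  induction a using Fin.lastCases with
  | cast a =>
    simp only [mergeLast, Fin.snoc_castSucc] at hi' hj'
    exact hadm _ i j hi hi' hj hj'
  | last =>
    simp only [mergeLast, Fin.snoc_last] at hi' hj'
    set p := (Fin.last m).castSucc
    set K := blockStart μ (Fin.last (m + 1))
    have hK : blockStart μ p + μ p = K := by
      simp [p, K, blockStart_last, blockStart_castSucc, Fin.sum_univ_castSucc, Fin.init]
    have hinit : ∀ x : Fin N, blockStart μ p ≤ x → x < K → ∀ y : Fin N, blockStart μ p ≤ y →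
        y < K → s x y = 0 :=
      fun x hx hx' y hy hy' => hadm p x y hx (by omega) hy (by omega)
    have hlast : ∀ x : Fin N, K ≤ x → x < K + μ (Fin.last (m + 1)) → ∀ y : Fin N, K ≤ y →
        y < K + μ (Fin.last (m + 1)) → s x y = 0 :=
      fun x hx hx' y hy hy' => hadm _ x y hx hx' hy hy'
    rcases lt_or_ge (i : ℕ) K with hiK | hiK <;> rcases lt_or_ge (j : ℕ) K with hjK | hjK
    · exact hinit i hi hiK j hj hjK
    · -- `P` and `Q` lie between `i` and `j`, so `s i j = s i P + s P Q + s Q j`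
      have h₁ := hs.add_of_le_of_le (i := i) (j := P) (k := j) (by omega) (by omega)
      have h₂ := hs.add_of_le_of_le (i := P) (j := Q) (k := j) (by omega) (by omega)
      have := hinit i hi hiK P (by omega) (by omega)
      have := hlast Q (by omega) (by omega) j hjK (by omega)
      omega
    · have h₁ := hs.add_of_ge_of_ge (i := i) (j := Q) (k := j) (by omega) (by omega)
      have h₂ := hs.add_of_ge_of_ge (i := Q) (j := P) (k := j) (by omega) (by omega)
      have := hlast i hiK (by omega) Q (by omega) (by omega)
      have := hinit P (by omega) (by omega) j hj hjK
      omega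
    · exact hlast i hiK (by omega) j hjK (by omega)

theorem one_le_of_lt_blockStart_last_le {N m : ℕ} {s : Fin N → Fin N → ℕ} (hs : IsShiftMat s)
    (hsymm : ∀ i j, s i j = s j i) {μ : Fin (m + 1) → ℕ} (hpos : ∀ a, 0 < μ a)
    (hsum : ∑ a, μ a = N) (hadm : IsAdmissibleShape s μ)
    (hmin : ∀ (m' : ℕ) (ν : Fin m' → ℕ), (∀ a, 0 < ν a) → ∑ a, ν a = N →
      IsAdmissibleShape s ν → m + 1 ≤ m')
    {i j : Fin N} (hi : (i : ℕ) < blockStart μ (Fin.last m))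
    (hj : blockStart μ (Fin.last m) ≤ (j : ℕ)) : 1 ≤ s i j := by
  cases m with
  | zero => rw [blockStart_last, Fin.sum_univ_zero] at hi; omega
  | succ m =>
    by_contra! hij
    set K := blockStart μ (Fin.last (m + 1))
    obtain ⟨P, hP⟩ : ∃ P : Fin N, (P : ℕ) + 1 = K := ⟨⟨K - 1, by omega⟩, by simp only; omega⟩
    obtain ⟨Q, hQ⟩ : ∃ Q : Fin N, (Q : ℕ) = K := ⟨⟨K, by omega⟩, rfl⟩
    have hPQ : s P Q = 0 := by
      have := hs.le_of_le_of_le (i := i) (i' := P) (j' := Q) (j := j)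
        (by omega) (by omega) (by omega)
      omega
    have hmerged := isAdmissibleShape_mergeLast hs hadm hP hQ hPQ (hsymm P Q ▸ hPQ)
    have := hmin (m + 1) (mergeLast μ) (mergeLast_pos hpos) ((sum_mergeLast μ).trans hsum) hmerged
    omega

theorem stmt4_general (n m : ℕ) (s : Fin (n + 1) → Fin (n + 1) → ℕ)
    (hshift : IsShiftMat s)
    (hsymm : ∀ i j, s i j = s j i)
    (μ : Fin (m + 1) → ℕ)
    (hpos : ∀ a, 0 < μ a) (hsum : ∑ a, μ a = n + 1)
    (hadm : IsAdmissibleShape s μ)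
    (hmin : ∀ (m' : ℕ) (ν : Fin m' → ℕ), (∀ a, 0 < ν a) → (∑ a, ν a = n + 1) →
      IsAdmissibleShape s ν → m + 1 ≤ m')
    (ds : Fin (n + 1) → Fin (n + 1) → ℤ)
    (hds : ∀ i j, ds i j = (s i j : ℤ) -
      (if ((i : ℕ) < n + 1 - μ (Fin.last m) ∧ n + 1 - μ (Fin.last m) ≤ (j : ℕ)) ∨
          ((j : ℕ) < n + 1 - μ (Fin.last m) ∧ n + 1 - μ (Fin.last m) ≤ (i : ℕ))
        then 1 else 0)) :
    (∀ i j, 0 ≤ ds i j) ∧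
    IsShiftMat ds ∧
    (∀ i j, ds i j = ds j i) ∧
    IsAdmissibleShape ds μ := by
  set K := n + 1 - μ (Fin.last m)
  have hK : K = blockStart μ (Fin.last m) := by
    have := blockStart_last_add μ
    omega
  obtain rfl : ds = fun i j => (s i j : ℤ) - cutCrossing K i j := funext₂ hds
  have hcross : ∀ i j : Fin (n + 1), (i : ℕ) < K → K ≤ (j : ℕ) → 1 ≤ s i j := fun i j hi hj =>
    one_le_of_lt_blockStart_last_le hshift hsymm hpos hsum hadm hmin (hK ▸ hi) (hK ▸ hj)
  refine ⟨fun i j => ?_, hshift.natCast.sub (isShiftMat_cutCrossing _ K),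
    fun i j => by simp only [hsymm i j, cutCrossing_comm], ?_⟩
  · simp only [cutCrossing]
    split_ifs with h
    · rcases h with ⟨hi, hj⟩ | ⟨hj, hi⟩
      · have := hcross i j hi hj
        omega
      · have := hcross j i hj hi
        rw [hsymm]
        omega
    · omega
  · rw [hK]
    exact hadm.natCast.sub (isAdmissibleShape_cutCrossing μ _)

/-- given a nonzero symmetric shift matrix `s` with minimal
admissible shape `μ = (μ_1, …, μ_{m+1})`, the matrix `σ̇` obtained by
subtracting 1 from the entries `s i j` with exactly one of `i, j` exceeding
`N - μ_n` is again a symmetric shift matrix with nonnegative entries, and `μ`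
is admissible for it. -/
theorem stmt4 (n m : ℕ) (s : Fin (n + 1) → Fin (n + 1) → ℕ)
    (hshift : IsShiftMat s)
    (hsymm : ∀ i j, s i j = s j i)
    (hne : ∃ i j, s i j ≠ 0)
    (μ : Fin (m + 1) → ℕ)
    (hpos : ∀ a, 0 < μ a) (hsum : ∑ a, μ a = n + 1)
    (hadm : IsAdmissibleShape s μ)
    (hmin : ∀ (m' : ℕ) (ν : Fin m' → ℕ), (∀ a, 0 < ν a) → (∑ a, ν a = n + 1) →
      IsAdmissibleShape s ν → m + 1 ≤ m')
    (ds : Fin (n + 1) → Fin (n + 1) → ℤ)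
    (hds : ∀ i j, ds i j = (s i j : ℤ) -
      (if ((i : ℕ) < n + 1 - μ (Fin.last m) ∧ n + 1 - μ (Fin.last m) ≤ (j : ℕ)) ∨
          ((j : ℕ) < n + 1 - μ (Fin.last m) ∧ n + 1 - μ (Fin.last m) ≤ (i : ℕ))
        then 1 else 0)) :
    (∀ i j, 0 ≤ ds i j) ∧
    IsShiftMat ds ∧
    (∀ i j, ds i j = ds j i) ∧
    IsAdmissibleShape ds μ :=
  stmt4_general n m s hshift hsymm μ hpos hsum hadm hmin ds hds
end

section
/- Let σ = (s_{i,j}) be an N×N symmetric shift matrix. In the current algebra gl_N[z], with ε_{i,j;r} := e_{i,j}⊗z^r − (−1)^r e_{j,i}⊗z^r, the subspace spanned by { ε_{i,j;r} : 1 ≤ i, j ≤ N, r ≥ s_{i,j} } is a Lie subalgebra: the bracket of any two spanning elements lies again in the span. -/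
open Polynomial Matrix

/-- The element `ε_{i,j;r} = e_{i,j} ⊗ z^r - (-1)^r e_{j,i} ⊗ z^r` of the
current algebra `gl_N[z]`, realized as matrices over `ℂ[z]`. -/
noncomputable def epsCur (N : ℕ) (i j : Fin N) (r : ℕ) :
    Matrix (Fin N) (Fin N) (Polynomial ℂ) :=
  Matrix.single i j (X ^ r) -
    Matrix.single j i ((-1 : Polynomial ℂ) ^ r * X ^ r)

private lemma Emul {N : ℕ} (a b c d : Fin N) (r t : ℕ) :
    single a b (X^r : Polynomial ℂ) * single c d (X^t)
      = if b = c then single a d (X^(r+t)) else 0 := by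
  split_ifs with h
  · subst h; rw [single_mul_single_same, ← pow_add]
  · exact Matrix.single_mul_single_of_ne (h := h) ..

private lemma epsE {N : ℕ} (i j : Fin N) (r : ℕ) :
    epsCur N i j r = single i j (X^r) - ((-1:ℂ)^r) • single j i (X^r) := by
  unfold epsCur
  rw [smul_single]
  congr 2
  simp [Algebra.smul_def]

set_option maxHeartbeats 2000000 in
private lemma key {N : ℕ} (i j k l : Fin N) (r t : ℕ) :
    ⁅epsCur N i j r, epsCur N k l t⁆ =
      (if j = k then (1:ℂ) else 0) • epsCur N i l (r+t)
    - (if l = i then (1:ℂ) else 0) • epsCur N k j (r+t)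
    - (if i = k then ((-1:ℂ)^r) else 0) • epsCur N j l (r+t)
    + (if j = l then ((-1:ℂ)^r) else 0) • epsCur N k i (r+t) := by
  rw [Ring.lie_def]
  have h4 : ((-1:ℂ)^r)*(-1:ℂ)^(r+t) = (-1)^t := by rw [pow_add, ← mul_assoc, ← mul_pow]; norm_num
  simp only [epsE, sub_mul, mul_sub, smul_mul_assoc, mul_smul_comm, Emul, smul_smul,
    smul_ite, smul_zero, ite_smul, zero_smul, one_smul, smul_sub, Nat.add_comm t r, h4,
    mul_comm ((-1:ℂ)^t) ((-1:ℂ)^r)]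
  have he : ∀ n:ℕ, (-1:ℂ)^(n*2) = 1 := fun n => by rw [mul_comm, pow_mul]; norm_num
  have he' : ∀ n:ℕ, (-1:ℂ)^(2*n) = 1 := fun n => by rw [pow_mul]; norm_num
  split_ifs <;> subst_vars <;>
    first
      | (exact absurd rfl (by assumption))
      | (match_scalars <;> (first | ring1 | (ring_nf; simp [he, he']; try ring1)))

/-- for a symmetric shift matrix `s`, the span of
`{ε_{i,j;r} : r ≥ s i j}` in the current algebra `gl_N[z]` is closed under the
Lie bracket. -/
theorem stmt6 (N : ℕ) (s : Fin N → Fin N → ℕ)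
    (hshift : ∀ i j k : Fin N,
      |((i : ℕ) : ℤ) - ((j : ℕ) : ℤ)| + |((j : ℕ) : ℤ) - ((k : ℕ) : ℤ)| =
        |((i : ℕ) : ℤ) - ((k : ℕ) : ℤ)| →
      s i j + s j k = s i k)
    (hsymm : ∀ i j, s i j = s j i) :
    ∀ x ∈ {x : Matrix (Fin N) (Fin N) (Polynomial ℂ) |
            ∃ i j r, s i j ≤ r ∧ x = epsCur N i j r},
    ∀ y ∈ {x : Matrix (Fin N) (Fin N) (Polynomial ℂ) |
            ∃ i j r, s i j ≤ r ∧ x = epsCur N i j r},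
      ⁅x, y⁆ ∈ Submodule.span ℂ
        {x : Matrix (Fin N) (Fin N) (Polynomial ℂ) |
          ∃ i j r, s i j ≤ r ∧ x = epsCur N i j r} := by
  -- betweenness implies additivity
  have hb : ∀ a b c : Fin N, (a:ℕ) ≤ b → (b:ℕ) ≤ c → s a b + s b c = s a c := by
    intro a b c h1 h2
    apply hshift
    simp only [Int.abs_eq_natAbs]
    omega
  -- triangle inequality
  have htri : ∀ a b c : Fin N, s a c ≤ s a b + s b c := by
    intro a b c
    have hab := hsymm a b
    have hbc := hsymm b c
    have hac := hsymm a c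
    rcases le_total (a:ℕ) (c:ℕ) with h | h
    · rcases le_total (b:ℕ) (a:ℕ) with h1 | h1
      · have := hb b a c h1 h; omega
      · rcases le_total (b:ℕ) (c:ℕ) with h2 | h2
        · have := hb a b c h1 h2; omega
        · have := hb a c b h h2; omega
    · rcases le_total (b:ℕ) (c:ℕ) with h1 | h1
      · have := hb b c a h1 h; omega
      · rcases le_total (b:ℕ) (a:ℕ) with h2 | h2
        · have := hb c b a h1 h2; omega
        · have := hb c a b h h2; omega
  intro x hx y hy
  obtain ⟨i, j, r, hr, rfl⟩ := hx
  obtain ⟨k, l, t, ht, rfl⟩ := hy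
  rw [key]
  have hmem : ∀ (P : Prop) [Decidable P] (c : ℂ) (a b : Fin N) (u : ℕ),
      (P → s a b ≤ u) →
      (if P then c else 0) • epsCur N a b u ∈ Submodule.span ℂ
        {x : Matrix (Fin N) (Fin N) (Polynomial ℂ) |
          ∃ i j r, s i j ≤ r ∧ x = epsCur N i j r} := by
    intro P _ c a b u hP
    split_ifs with h
    · exact Submodule.smul_mem _ _ (Submodule.subset_span ⟨a, b, u, hP h, rfl⟩)
    · rw [zero_smul]; exact Submodule.zero_mem _
  refine add_mem (sub_mem (sub_mem (hmem _ _ _ _ _ ?_) (hmem _ _ _ _ _ ?_))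
    (hmem _ _ _ _ _ ?_)) (hmem _ _ _ _ _ ?_)
  · rintro rfl
    have := htri i j l
    omega
  · rintro rfl
    have := htri k l j
    omega
  · rintro rfl
    have h1 := htri j i l
    have h2 := hsymm j i
    omega
  · rintro rfl
    have h1 := htri k j i
    have h2 := hsymm j i
    omega
end

section
/- Let so_N ⊂ gl_N be spanned by f_{i,j} := e_{i,j} − e_{j,i}, and work in the formal power series ring U(so_N)[[u^{−1}]]. Define s_{i,j}(u) := δ_{i,j} + (u + 1/2)^{−1} f_{i,j}, where (u+1/2)^{−1} is expanded as the series Σ_{m≥0} (−1/2)^m u^{−m−1}. Then these series satisfy the type AI quaternary relations: (u²−v²)[s_{i,j}(u), s_{k,l}(v)] = (u+v)(s_{k,j}(u)s_{i,l}(v) − s_{k,j}(v)s_{i,l}(u)) − (u−v)(s_{i,k}(u)s_{j,l}(v) − s_{k,i}(v)s_{l,j}(u)) + (s_{k,i}(u)s_{j,l}(v) − s_{k,i}(v)s_{j,l}(u)), as well as the symmetry relations s_{j,i}(−u) = s_{i,j}(u) + (s_{i,j}(u) − s_{i,j}(−u))/(2u). -/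
set_option synthInstance.maxHeartbeats 1000000
set_option maxHeartbeats 1000000

noncomputable section

/-- `s(u)` viewed in `A[[u⁻¹, v⁻¹]] = (A⟦X⟧)⟦Y⟧` (inner variable `X = u⁻¹`). -/
def lowX (A : Type*) [Semiring A] (c : ℕ → A) : PowerSeries (PowerSeries A) :=
  PowerSeries.C (R := PowerSeries A) (PowerSeries.mk c)

/-- `s(v)` viewed in `A[[u⁻¹, v⁻¹]] = (A⟦X⟧)⟦Y⟧` (outer variable `Y = v⁻¹`). -/
def lowY (A : Type*) [Semiring A] (c : ℕ → A) : PowerSeries (PowerSeries A) :=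
  PowerSeries.mk fun r => PowerSeries.C (R := A) (c r)

/-- The variable `u⁻¹`. -/
def XX (A : Type*) [Semiring A] : PowerSeries (PowerSeries A) :=
  PowerSeries.C (R := PowerSeries A) PowerSeries.X

/-- The variable `v⁻¹`. -/
def YY (A : Type*) [Semiring A] : PowerSeries (PowerSeries A) :=
  PowerSeries.X

/-- The type AI quaternary relations
`(u²-v²)[s_{ij}(u), s_{kl}(v)] = (u+v)(s_{kj}(u)s_{il}(v) - s_{kj}(v)s_{il}(u))
  - (u-v)(s_{ik}(u)s_{jl}(v) - s_{ki}(v)s_{lj}(u))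
  + (s_{ki}(u)s_{jl}(v) - s_{ki}(v)s_{jl}(u))`,
written with denominators cleared (multiplied through by `x²y²` where
`x = u⁻¹`, `y = v⁻¹`). -/
def QuatAI (A : Type*) [Ring A] {N : ℕ} (sc : Fin N → Fin N → ℕ → A) : Prop :=
  ∀ i j k l : Fin N,
    (YY A ^ 2 - XX A ^ 2) *
        (lowX A (sc i j) * lowY A (sc k l) - lowY A (sc k l) * lowX A (sc i j)) =
      XX A * YY A * (XX A + YY A) *
          (lowX A (sc k j) * lowY A (sc i l) - lowY A (sc k j) * lowX A (sc i l))
        - XX A * YY A * (YY A - XX A) *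
          (lowX A (sc i k) * lowY A (sc j l) - lowY A (sc k i) * lowX A (sc l j))
        + XX A ^ 2 * YY A ^ 2 *
          (lowX A (sc k i) * lowY A (sc j l) - lowY A (sc k i) * lowX A (sc j l))

/-- The type AI symmetry relations
`s_{ji}(-u) = s_{ij}(u) + (s_{ij}(u) - s_{ij}(-u)) / (2u)`,
as identities of formal power series in `X = u⁻¹`. -/
def SymAI (A : Type*) [Ring A] [Algebra ℂ A] {N : ℕ}
    (sc : Fin N → Fin N → ℕ → A) : Prop :=
  ∀ i j : Fin N,
    PowerSeries.mk (fun r => ((-1 : ℂ) ^ r) • sc j i r) =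
      PowerSeries.mk (sc i j) +
        (2 : ℂ)⁻¹ • (PowerSeries.X *
          (PowerSeries.mk (sc i j) -
            PowerSeries.mk fun r => ((-1 : ℂ) ^ r) • sc i j r))

attribute [local instance 100] LieRing.ofAssociativeRing

/-- The orthogonal Lie algebra `so_N`: skew-symmetric `N × N` matrices. -/
abbrev soN (N : ℕ) : LieSubalgebra ℂ (Matrix (Fin N) (Fin N) ℂ) :=
  skewAdjointMatricesLieSubalgebra (1 : Matrix (Fin N) (Fin N) ℂ)

/-- The universal enveloping algebra `U(so_N)`. -/
abbrev UEnv (N : ℕ) := UniversalEnvelopingAlgebra ℂ ↥(soN N)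

/-- The coefficients of `s_{ij}(u) = δ_{ij} + (u + 1/2)⁻¹ f_{ij}`, where
`(u + 1/2)⁻¹ = ∑_{m ≥ 0} (-1/2)^m u^{-m-1}`. -/
def sCoeff (N : ℕ) (f : Fin N → Fin N → ↥(soN N)) (i j : Fin N) : ℕ → UEnv N :=
  fun r => if r = 0 then (if i = j then 1 else 0)
    else ((-1 / 2 : ℂ) ^ (r - 1)) • UniversalEnvelopingAlgebra.ι ℂ (f i j)

/-! ### Auxiliary lemmas -/

open PowerSeries

section Aux

/-- Product of standard basis matrices. -/
lemma E_mul' {N : ℕ} (i j k l : Fin N) :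
    Matrix.single i j (1:ℂ) * Matrix.single k l (1:ℂ) =
      if j = k then Matrix.single i l (1:ℂ) else 0 := by
  split_ifs with h
  · subst h; rw [Matrix.single_mul_single_same, one_mul]
  · exact Matrix.single_mul_single_of_ne (n := Fin N) i j k h (c := (1:ℂ)) (1:ℂ)

lemma f_anti' {N : ℕ} (f : Fin N → Fin N → ↥(soN N))
    (hf : ∀ i j, (f i j : Matrix (Fin N) (Fin N) ℂ) =
      Matrix.single i j 1 - Matrix.single j i 1) (i j : Fin N) :
    f j i = - f i j := by
  ext : 1
  push_cast [hf]
  abel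

lemma f_bracket' {N : ℕ} (f : Fin N → Fin N → ↥(soN N))
    (hf : ∀ i j, (f i j : Matrix (Fin N) (Fin N) ℂ) =
      Matrix.single i j 1 - Matrix.single j i 1) (i j k l : Fin N) :
    ⁅f i j, f k l⁆ = (if j = k then f i l else 0) - (if i = l then f k j else 0)
      + (if i = k then f l j else 0) - (if j = l then f i k else 0) := by
  ext : 1
  push_cast [apply_ite (fun z : ↥(soN N) => (z : Matrix (Fin N) (Fin N) ℂ))]
  rw [Ring.lie_def]
  by_cases h1 : j = k <;> by_cases h2 : i = l <;> by_cases h3 : i = k <;> by_cases h4 : j = l <;>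
    simp only [hf, h1, h2, h3, h4, if_true, if_false, sub_mul, mul_sub, E_mul'] <;>
    simp [E_mul', h1, h2, h3, h4, eq_comm, Ne.symm] <;> split_ifs <;> abel

/-- Formal inverse of `2 + X`. -/
def inv2X (B : Type*) [Ring B] [Algebra ℂ B] : PowerSeries B :=
  PowerSeries.mk fun n => algebraMap ℂ B ((-2⁻¹ : ℂ) ^ n * 2⁻¹)

lemma two_add_X_mul_inv2X (B : Type*) [Ring B] [Algebra ℂ B] :
    ((2 : PowerSeries B) + X) * inv2X B = 1 := by
  have h2 : (2 : PowerSeries B) = C (R := B) 2 := by rw [map_ofNat]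
  ext n
  rw [add_mul, map_add, h2, coeff_C_mul]
  cases n with
  | zero =>
    rw [coeff_zero_X_mul]
    simp only [inv2X, coeff_mk, pow_zero, one_mul, coeff_one, if_pos rfl, add_zero]
    rw [show (2 : B) = algebraMap ℂ B 2 by rw [map_ofNat], ← map_mul]
    norm_num
  | succ m =>
    rw [coeff_succ_X_mul]
    simp only [inv2X, coeff_mk, coeff_one, Nat.succ_ne_zero, if_false]
    rw [show (2 : B) = algebraMap ℂ B 2 by rw [map_ofNat], ← map_mul, ← map_add]
    rw [show (2 : ℂ) * ((-2⁻¹ : ℂ) ^ (m+1) * 2⁻¹) + (-2⁻¹ : ℂ) ^ m * 2⁻¹ = 0 by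
      rw [pow_succ]; ring]
    exact map_zero _

lemma inv2X_mul_two_add_X (B : Type*) [Ring B] [Algebra ℂ B] :
    inv2X B * ((2 : PowerSeries B) + X) = 1 := by
  rw [((Commute.ofNat_left 2 (inv2X B)).add_left (commute_X (inv2X B)).symm).eq.symm,
    two_add_X_mul_inv2X]

lemma csmul {R : Type*} [Ring R] (c : Subring.center R) (t : R) : c • t = (c : R) * t := rfl

lemma central_inv {R : Type*} [Ring R] {a b : R} (ha : a ∈ Subring.center R)
    (h1 : a * b = 1) (h2 : b * a = 1) : b ∈ Subring.center R := by
  rw [Subring.mem_center_iff] at ha ⊢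
  intro g
  calc g * b = (b * a) * (g * b) := by rw [h2, one_mul]
    _ = b * ((a * g) * b) := by noncomm_ring
    _ = b * ((g * a) * b) := by rw [ha g]
    _ = b * g * (a * b) := by noncomm_ring
    _ = b * g := by rw [h1, mul_one]

lemma center_XX (A : Type*) [Ring A] :
    XX A ∈ Subring.center (PowerSeries (PowerSeries A)) := by
  rw [Subring.mem_center_iff]
  intro g
  apply PowerSeries.ext
  intro n
  rw [XX, coeff_mul_C, coeff_C_mul]
  exact (commute_X (coeff (R := PowerSeries A) n g)).eq

lemma center_YY (A : Type*) [Ring A] :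
    YY A ∈ Subring.center (PowerSeries (PowerSeries A)) := by
  rw [Subring.mem_center_iff]
  intro g
  exact (commute_X g).eq

theorem key_s9 {S R : Type*} [CommRing S] [Ring R] [Algebra S R]
    (x y dij dkl dkj dil dik djl dki dlj : S)
    (aij akl akj ail aik ajl aki alj : R)
    (hki : aki = -aik) (hlj : alj = -ajl) (hdki : dki = dik) (hdlj : dlj = djl)
    (h : aij * akl - akl * aij = dkj • ail - dil • akj - dik • ajl - djl • aik) :
    (y^2 - x^2) •
        (((dij*(2+x)) • (1:R) + (2*x) • aij) * ((dkl*(2+y)) • 1 + (2*y) • akl)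
          - ((dkl*(2+y)) • 1 + (2*y) • akl) * ((dij*(2+x)) • 1 + (2*x) • aij)) =
      (x*y*(x+y)) •
        (((dkj*(2+x)) • (1:R) + (2*x) • akj) * ((dil*(2+y)) • 1 + (2*y) • ail)
          - ((dkj*(2+y)) • 1 + (2*y) • akj) * ((dil*(2+x)) • 1 + (2*x) • ail))
      - (x*y*(y-x)) •
        (((dik*(2+x)) • (1:R) + (2*x) • aik) * ((djl*(2+y)) • 1 + (2*y) • ajl)
          - ((dki*(2+y)) • 1 + (2*y) • aki) * ((dlj*(2+x)) • 1 + (2*x) • alj))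
      + (x^2*y^2) •
        (((dki*(2+x)) • (1:R) + (2*x) • aki) * ((djl*(2+y)) • 1 + (2*y) • ajl)
          - ((dki*(2+y)) • 1 + (2*y) • aki) * ((djl*(2+x)) • 1 + (2*x) • ajl)) := by
  rw [hki, hlj, hdki, hdlj]
  have h' : aij * akl = (dkj • ail - dil • akj - dik • ajl - djl • aik) + akl * aij := by
    rw [← h]; abel
  simp only [mul_add, add_mul, mul_sub, sub_mul, smul_add, smul_sub, smul_smul,
    smul_mul_assoc, mul_smul_comm, one_mul, mul_one, mul_neg, neg_mul, smul_neg]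
  rw [h']
  simp only [mul_add, mul_sub, smul_add, smul_sub, smul_smul]
  module

theorem rearr {S R : Type*} [CommRing S] [Ring R] [Algebra S R]
    (s t c : S) (P Q Q' P' : R) :
    (s*t) • (c • (P*Q - Q'*P')) = c • ((s•P)*(t•Q) - (t•Q')*(s•P')) := by
  simp only [smul_mul_smul_comm, smul_sub, smul_smul]
  module

theorem key' {S R : Type*} [CommRing S] [Ring R] [Algebra S R]
    (x y dij dkl dkj dil dik djl dki dlj : S)
    (aij akl akj ail aik ajl aki alj : R)
    (Pij Pkj Pil Pik Plj Pki Pjl Qkl Qkj Qil Qjl Qki : R)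
    (hki : aki = -aik) (hlj : alj = -ajl) (hdki : dki = dik) (hdlj : dlj = djl)
    (h : aij * akl - akl * aij = dkj • ail - dil • akj - dik • ajl - djl • aik)
    (HPij : (2+x) • Pij = (dij*(2+x)) • (1:R) + (2*x) • aij)
    (HPkj : (2+x) • Pkj = (dkj*(2+x)) • (1:R) + (2*x) • akj)
    (HPil : (2+x) • Pil = (dil*(2+x)) • (1:R) + (2*x) • ail)
    (HPik : (2+x) • Pik = (dik*(2+x)) • (1:R) + (2*x) • aik)
    (HPlj : (2+x) • Plj = (dlj*(2+x)) • (1:R) + (2*x) • alj)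
    (HPki : (2+x) • Pki = (dki*(2+x)) • (1:R) + (2*x) • aki)
    (HPjl : (2+x) • Pjl = (djl*(2+x)) • (1:R) + (2*x) • ajl)
    (HQkl : (2+y) • Qkl = (dkl*(2+y)) • (1:R) + (2*y) • akl)
    (HQkj : (2+y) • Qkj = (dkj*(2+y)) • (1:R) + (2*y) • akj)
    (HQil : (2+y) • Qil = (dil*(2+y)) • (1:R) + (2*y) • ail)
    (HQjl : (2+y) • Qjl = (djl*(2+y)) • (1:R) + (2*y) • ajl)
    (HQki : (2+y) • Qki = (dki*(2+y)) • (1:R) + (2*y) • aki) :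
    ((2+x)*(2+y)) • ((y^2 - x^2) • (Pij * Qkl - Qkl * Pij)) =
    ((2+x)*(2+y)) • (
      (x*y*(x+y)) • (Pkj * Qil - Qkj * Pil)
      - (x*y*(y-x)) • (Pik * Qjl - Qki * Plj)
      + (x^2*y^2) • (Pki * Qjl - Qki * Pjl)) := by
  have hsub : ∀ a b c : R, ((2+x)*(2+y)) • (a - b + c) =
      ((2+x)*(2+y)) • a - ((2+x)*(2+y)) • b + ((2+x)*(2+y)) • c := by
    intro a b c; rw [smul_add, smul_sub]
  rw [hsub, rearr, rearr, rearr, rearr, HPij, HQkl, HPkj, HQil, HQkj, HPil, HPik, HQjl,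
    HQki, HPlj, HPki, HPjl]
  exact key_s9 x y dij dkl dkj dil dik djl dki dlj aij akl akj ail aik ajl aki alj
    hki hlj hdki hdlj h

/-- The recursion satisfied by the coefficients. -/
lemma sCoeff_rec (N : ℕ) (f : Fin N → Fin N → ↥(soN N)) (i j : Fin N) (m : ℕ) :
    (2 : UEnv N) * sCoeff N f i j (m+2) + sCoeff N f i j (m+1) = 0 := by
  simp only [sCoeff, Nat.succ_ne_zero, if_false, show m+2-1 = m+1 from rfl,
    show m+1-1 = m from rfl]
  rw [Algebra.smul_def, Algebra.smul_def, ← mul_assoc,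
    ← map_ofNat (algebraMap ℂ (UEnv N)) 2, ← map_mul, ← add_mul, ← map_add,
    show (2:ℂ) * (-1/2 : ℂ)^(m+1) + (-1/2 : ℂ)^m = 0 by rw [pow_succ]; ring,
    map_zero, zero_mul]


lemma K1A (N : ℕ) (f : Fin N → Fin N → ↥(soN N)) (i j : Fin N) :
    ((2 : PowerSeries (UEnv N)) + X) * PowerSeries.mk (sCoeff N f i j) =
      (if i = j then (1 : PowerSeries (UEnv N)) else 0) * (2 + X)
        + (2 * X) * C (R := UEnv N) (UniversalEnvelopingAlgebra.ι ℂ (f i j)) := by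
  have h2 : (2 : PowerSeries (UEnv N)) = C (R := UEnv N) 2 := by rw [map_ofNat]
  ext n
  rw [add_mul, map_add, h2, coeff_C_mul, map_add, ite_mul, one_mul, zero_mul,
    mul_assoc, coeff_C_mul, coeff_mul_C]
  cases n with
  | zero =>
    simp [sCoeff, apply_ite (coeff (R := UEnv N) 0), coeff_X, mul_comm]
  | succ m =>
    rw [coeff_succ_X_mul, coeff_mk, coeff_mk]
    cases m with
    | zero =>
      simp [sCoeff, apply_ite (coeff (R := UEnv N) 1), coeff_X, two_mul]
      abel
    | succ p =>
      have h0 := sCoeff_rec N f i j p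
      simp only [apply_ite (coeff (R := UEnv N) (p+2)), coeff_X, map_add, coeff_C]
      norm_num
      rw [show (2:UEnv N) * sCoeff N f i j (p + 1 + 1) = - sCoeff N f i j (p+1) from
        eq_neg_of_add_eq_zero_left h0]
      split_ifs <;> simp <;> omega

lemma K2A (N : ℕ) (f : Fin N → Fin N → ↥(soN N)) (k l : Fin N) :
    ((2 : PowerSeries (PowerSeries (UEnv N))) + YY (UEnv N)) * lowY (UEnv N) (sCoeff N f k l) =
      (if k = l then (1 : PowerSeries (PowerSeries (UEnv N))) else 0) * (2 + YY (UEnv N))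
        + (2 * YY (UEnv N)) *
            C (R := PowerSeries (UEnv N)) (C (R := UEnv N) (UniversalEnvelopingAlgebra.ι ℂ (f k l))) := by
  have h2 : (2 : PowerSeries (PowerSeries (UEnv N))) = C (R := PowerSeries (UEnv N)) 2 := by
    rw [map_ofNat]
  simp only [YY, lowY]
  apply PowerSeries.ext
  intro n
  rw [add_mul, map_add, h2, coeff_C_mul, map_add, ite_mul, one_mul, zero_mul,
    mul_assoc, coeff_C_mul, coeff_mul_C]
  cases n with
  | zero =>
    simp [sCoeff, apply_ite (coeff (R := PowerSeries (UEnv N)) 0), coeff_X, mul_comm,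
      apply_ite (C (R := UEnv N))]
  | succ m =>
    rw [coeff_succ_X_mul, coeff_mk, coeff_mk]
    cases m with
    | zero =>
      simp [sCoeff, apply_ite (coeff (R := PowerSeries (UEnv N)) 1), coeff_X, two_mul,
        apply_ite (C (R := UEnv N))]
      abel
    | succ p =>
      have h0 := sCoeff_rec N f k l p
      simp only [apply_ite (coeff (R := PowerSeries (UEnv N)) (p+2)), coeff_X, map_add, coeff_C]
      norm_num
      rw [show (2 : PowerSeries (UEnv N)) = C (R := UEnv N) 2 from by rw [map_ofNat], ← map_mul,
        ← map_add]
      rw [show (2:UEnv N) * sCoeff N f k l (p + 1 + 1) + sCoeff N f k l (p+1) = 0 from h0]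
      split_ifs <;> simp <;> omega

lemma K1R (N : ℕ) (f : Fin N → Fin N → ↥(soN N)) (i j : Fin N) :
    ((2 : PowerSeries (PowerSeries (UEnv N))) + XX (UEnv N)) * lowX (UEnv N) (sCoeff N f i j) =
      (if i = j then (1 : PowerSeries (PowerSeries (UEnv N))) else 0) * (2 + XX (UEnv N))
        + (2 * XX (UEnv N)) *
            C (R := PowerSeries (UEnv N)) (C (R := UEnv N) (UniversalEnvelopingAlgebra.ι ℂ (f i j))) := by
  have e : (2 : PowerSeries (PowerSeries (UEnv N))) + XX (UEnv N)
      = C (R := PowerSeries (UEnv N)) ((2 : PowerSeries (UEnv N)) + X) := by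
    simp only [XX]; rw [map_add, map_ofNat]
  have e2 : (2 : PowerSeries (PowerSeries (UEnv N))) * XX (UEnv N)
      = C (R := PowerSeries (UEnv N)) ((2 : PowerSeries (UEnv N)) * X) := by
    simp only [XX]; rw [map_mul, map_ofNat]
  rw [e, e2, lowX, ← map_mul, K1A, map_add, map_mul, map_mul,
    apply_ite (C (R := PowerSeries (UEnv N))), map_one, map_zero, ← e]

lemma iota_anti (N : ℕ) (f : Fin N → Fin N → ↥(soN N))
    (hf : ∀ i j, (f i j : Matrix (Fin N) (Fin N) ℂ) =
      Matrix.single i j 1 - Matrix.single j i 1) (i j : Fin N) :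
    UniversalEnvelopingAlgebra.ι ℂ (f j i) = - UniversalEnvelopingAlgebra.ι ℂ (f i j) := by
  rw [f_anti' f hf, map_neg]

lemma FF_rel (N : ℕ) (f : Fin N → Fin N → ↥(soN N))
    (hf : ∀ i j, (f i j : Matrix (Fin N) (Fin N) ℂ) =
      Matrix.single i j 1 - Matrix.single j i 1) (i j k l : Fin N) :
    UniversalEnvelopingAlgebra.ι ℂ (f i j) * UniversalEnvelopingAlgebra.ι ℂ (f k l)
      - UniversalEnvelopingAlgebra.ι ℂ (f k l) * UniversalEnvelopingAlgebra.ι ℂ (f i j)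
    = (if j = k then UniversalEnvelopingAlgebra.ι ℂ (f i l) else 0)
      - (if i = l then UniversalEnvelopingAlgebra.ι ℂ (f k j) else 0)
      - (if i = k then UniversalEnvelopingAlgebra.ι ℂ (f j l) else 0)
      - (if j = l then UniversalEnvelopingAlgebra.ι ℂ (f i k) else 0) := by
  have h1 := congrArg (UniversalEnvelopingAlgebra.ι ℂ) (f_bracket' f hf i j k l)
  rw [LieHom.map_lie, Ring.lie_def] at h1
  rw [h1, map_sub, map_add, map_sub,
    apply_ite (fun z : ↥(soN N) => UniversalEnvelopingAlgebra.ι ℂ z),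
    apply_ite (fun z : ↥(soN N) => UniversalEnvelopingAlgebra.ι ℂ z),
    apply_ite (fun z : ↥(soN N) => UniversalEnvelopingAlgebra.ι ℂ z),
    apply_ite (fun z : ↥(soN N) => UniversalEnvelopingAlgebra.ι ℂ z)]
  simp only [map_zero, iota_anti N f hf j l]
  split_ifs <;> abel

/-- `XX` as an element of the center. -/
def xc (N : ℕ) : Subring.center (PowerSeries (PowerSeries (UEnv N))) :=
  ⟨XX (UEnv N), center_XX _⟩

/-- `YY` as an element of the center. -/
def yc (N : ℕ) : Subring.center (PowerSeries (PowerSeries (UEnv N))) :=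
  ⟨YY (UEnv N), center_YY _⟩

/-- `f i j` as a constant of `A⟦X⟧⟦Y⟧`. -/
def Fc (N : ℕ) (f : Fin N → Fin N → ↥(soN N)) (i j : Fin N) :
    PowerSeries (PowerSeries (UEnv N)) :=
  C (R := PowerSeries (UEnv N)) (C (R := UEnv N) (UniversalEnvelopingAlgebra.ι ℂ (f i j)))

lemma coe_two_add_xc (N : ℕ) :
    (((2 : Subring.center (PowerSeries (PowerSeries (UEnv N)))) + xc N :
        Subring.center (PowerSeries (PowerSeries (UEnv N)))) :
      PowerSeries (PowerSeries (UEnv N))) = 2 + XX (UEnv N) := by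
  push_cast [xc]
  rfl

lemma coe_two_add_yc (N : ℕ) :
    (((2 : Subring.center (PowerSeries (PowerSeries (UEnv N)))) + yc N :
        Subring.center (PowerSeries (PowerSeries (UEnv N)))) :
      PowerSeries (PowerSeries (UEnv N))) = 2 + YY (UEnv N) := by
  push_cast [yc]
  rfl

lemma HPX (N : ℕ) (f : Fin N → Fin N → ↥(soN N)) (p q : Fin N)
    (d : Subring.center (PowerSeries (PowerSeries (UEnv N))))
    (hd : (d : PowerSeries (PowerSeries (UEnv N))) = if p = q then 1 else 0) :
    (2 + xc N) • lowX (UEnv N) (sCoeff N f p q) =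
      (d * (2 + xc N)) • (1 : PowerSeries (PowerSeries (UEnv N)))
        + ((2 : Subring.center (PowerSeries (PowerSeries (UEnv N)))) * xc N) • Fc N f p q := by
  rw [csmul, csmul, csmul, coe_two_add_xc, mul_one]
  rw [show ((d * (2 + xc N) : Subring.center (PowerSeries (PowerSeries (UEnv N)))) :
      PowerSeries (PowerSeries (UEnv N))) = (d : PowerSeries (PowerSeries (UEnv N))) *
        (2 + XX (UEnv N)) by
      rw [show ((d * (2 + xc N) : Subring.center (PowerSeries (PowerSeries (UEnv N)))) :
        PowerSeries (PowerSeries (UEnv N))) = (d : PowerSeries (PowerSeries (UEnv N))) *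
        (((2 + xc N : Subring.center (PowerSeries (PowerSeries (UEnv N)))))  :
        PowerSeries (PowerSeries (UEnv N))) from rfl, coe_two_add_xc]]
  rw [show (((2 : Subring.center (PowerSeries (PowerSeries (UEnv N)))) * xc N :
      Subring.center (PowerSeries (PowerSeries (UEnv N)))) :
      PowerSeries (PowerSeries (UEnv N))) = 2 * XX (UEnv N) by push_cast [xc]; rfl]
  rw [hd, Fc]
  exact K1R N f p q

lemma HPY (N : ℕ) (f : Fin N → Fin N → ↥(soN N)) (p q : Fin N)
    (d : Subring.center (PowerSeries (PowerSeries (UEnv N))))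
    (hd : (d : PowerSeries (PowerSeries (UEnv N))) = if p = q then 1 else 0) :
    (2 + yc N) • lowY (UEnv N) (sCoeff N f p q) =
      (d * (2 + yc N)) • (1 : PowerSeries (PowerSeries (UEnv N)))
        + ((2 : Subring.center (PowerSeries (PowerSeries (UEnv N)))) * yc N) • Fc N f p q := by
  rw [csmul, csmul, csmul, coe_two_add_yc, mul_one]
  rw [show ((d * (2 + yc N) : Subring.center (PowerSeries (PowerSeries (UEnv N)))) :
      PowerSeries (PowerSeries (UEnv N))) = (d : PowerSeries (PowerSeries (UEnv N))) *
        (2 + YY (UEnv N)) by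
      rw [show ((d * (2 + yc N) : Subring.center (PowerSeries (PowerSeries (UEnv N)))) :
        PowerSeries (PowerSeries (UEnv N))) = (d : PowerSeries (PowerSeries (UEnv N))) *
        (((2 + yc N : Subring.center (PowerSeries (PowerSeries (UEnv N)))))  :
        PowerSeries (PowerSeries (UEnv N))) from rfl, coe_two_add_yc]]
  rw [show (((2 : Subring.center (PowerSeries (PowerSeries (UEnv N)))) * yc N :
      Subring.center (PowerSeries (PowerSeries (UEnv N)))) :
      PowerSeries (PowerSeries (UEnv N))) = 2 * YY (UEnv N) by push_cast [yc]; rfl]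
  rw [hd, Fc]
  exact K2A N f p q

lemma coe_d {R : Type*} [Ring R] (c : Prop) [Decidable c] :
    (((if c then (1 : Subring.center R) else 0) : Subring.center R) : R) =
      if c then 1 else 0 := by
  split_ifs <;> simp

lemma hsm {R : Type*} [Ring R] (c : Prop) [Decidable c] (t : R) :
    ((if c then (1 : Subring.center R) else 0) : Subring.center R) • t =
      if c then t else 0 := by
  rw [csmul, coe_d]
  split_ifs <;> simp

lemma two_mem_center {R : Type*} [Ring R] : (2 : R) ∈ Subring.center R := by
  rw [← one_add_one_eq_two]
  exact add_mem (one_mem _) (one_mem _)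

lemma unit_x (N : ℕ) : IsUnit ((2 : Subring.center (PowerSeries (PowerSeries (UEnv N)))) + xc N) := by
  set w1 : PowerSeries (PowerSeries (UEnv N)) := C (R := PowerSeries (UEnv N)) (inv2X (UEnv N)) with hw1
  have e : (2 : PowerSeries (PowerSeries (UEnv N))) + XX (UEnv N)
      = C (R := PowerSeries (UEnv N)) ((2 : PowerSeries (UEnv N)) + X) := by
    simp only [XX]; rw [map_add, map_ofNat]
  have h1 : ((2 : PowerSeries (PowerSeries (UEnv N))) + XX (UEnv N)) * w1 = 1 := by
    rw [e, hw1, ← map_mul, two_add_X_mul_inv2X, map_one]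
  have h2 : w1 * ((2 : PowerSeries (PowerSeries (UEnv N))) + XX (UEnv N)) = 1 := by
    rw [e, hw1, ← map_mul, inv2X_mul_two_add_X, map_one]
  have hmem : w1 ∈ Subring.center (PowerSeries (PowerSeries (UEnv N))) :=
    central_inv (add_mem two_mem_center (center_XX _)) h1 h2
  exact IsUnit.of_mul_eq_one ⟨w1, hmem⟩ (Subtype.ext (by
    rw [show (((2 + xc N) * (⟨w1, hmem⟩ : Subring.center (PowerSeries (PowerSeries (UEnv N)))) :
        Subring.center (PowerSeries (PowerSeries (UEnv N)))) :
        PowerSeries (PowerSeries (UEnv N))) =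
      (((2 + xc N : Subring.center (PowerSeries (PowerSeries (UEnv N))))) :
        PowerSeries (PowerSeries (UEnv N))) * w1 from rfl, coe_two_add_xc, h1, OneMemClass.coe_one]))

lemma unit_y (N : ℕ) : IsUnit ((2 : Subring.center (PowerSeries (PowerSeries (UEnv N)))) + yc N) := by
  set w1 : PowerSeries (PowerSeries (UEnv N)) := inv2X (PowerSeries (UEnv N)) with hw1
  have e : (2 : PowerSeries (PowerSeries (UEnv N))) + YY (UEnv N)
      = (2 : PowerSeries (PowerSeries (UEnv N))) + X := by simp only [YY]
  have h1 : ((2 : PowerSeries (PowerSeries (UEnv N))) + YY (UEnv N)) * w1 = 1 := by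
    rw [e, hw1]; exact two_add_X_mul_inv2X _
  have h2 : w1 * ((2 : PowerSeries (PowerSeries (UEnv N))) + YY (UEnv N)) = 1 := by
    rw [e, hw1]; exact inv2X_mul_two_add_X _
  have hmem : w1 ∈ Subring.center (PowerSeries (PowerSeries (UEnv N))) :=
    central_inv (add_mem two_mem_center (center_YY _)) h1 h2
  exact IsUnit.of_mul_eq_one ⟨w1, hmem⟩ (Subtype.ext (by
    rw [show (((2 + yc N) * (⟨w1, hmem⟩ : Subring.center (PowerSeries (PowerSeries (UEnv N)))) :
        Subring.center (PowerSeries (PowerSeries (UEnv N)))) :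
        PowerSeries (PowerSeries (UEnv N))) =
      (((2 + yc N : Subring.center (PowerSeries (PowerSeries (UEnv N))))) :
        PowerSeries (PowerSeries (UEnv N))) * w1 from rfl, coe_two_add_yc, h1, OneMemClass.coe_one]))

lemma symAI_holds (N : ℕ) (f : Fin N → Fin N → ↥(soN N))
    (hf : ∀ i j, (f i j : Matrix (Fin N) (Fin N) ℂ) =
      Matrix.single i j 1 - Matrix.single j i 1) :
    SymAI (UEnv N) (sCoeff N f) := by
  intro i j
  ext n
  rw [map_add, PowerSeries.coeff_smul, coeff_mk, coeff_mk]
  cases n with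
  | zero =>
    rw [coeff_zero_X_mul, smul_zero, add_zero]
    by_cases h : i = j <;> simp [sCoeff, h, Ne.symm]
  | succ m =>
    rw [coeff_succ_X_mul, map_sub, coeff_mk, coeff_mk]
    cases m with
    | zero =>
      simp [sCoeff, iota_anti N f hf i j]
    | succ p =>
      simp only [sCoeff, Nat.succ_ne_zero, if_false, show p+2-1 = p+1 from rfl,
        show p+1-1 = p from rfl, iota_anti N f hf i j]
      simp only [smul_neg, smul_smul, smul_sub, ← neg_smul, ← sub_smul, ← add_smul]
      congr 1
      rw [pow_succ, pow_succ]
      ring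

end Aux

/-- in `U(so_N)[[u⁻¹]]`, the series
`s_{ij}(u) = δ_{ij} + (u + 1/2)⁻¹ f_{ij}` (with `f_{ij} = e_{ij} - e_{ji}`)
satisfy the type AI quaternary relations and the symmetry relations. -/
theorem stmt9 (N : ℕ) (f : Fin N → Fin N → ↥(soN N))
    (hf : ∀ i j, (f i j : Matrix (Fin N) (Fin N) ℂ) =
      Matrix.single i j 1 - Matrix.single j i 1) :
    QuatAI (UEnv N) (sCoeff N f) ∧ SymAI (UEnv N) (sCoeff N f) := by
  refine ⟨?_, symAI_holds N f hf⟩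
  intro i j k l
  classical
  -- scalarized coefficients
  have hcoe1 : ((((yc N)^2 - (xc N)^2 : Subring.center (PowerSeries (PowerSeries (UEnv N))))) :
      PowerSeries (PowerSeries (UEnv N))) = YY (UEnv N)^2 - XX (UEnv N)^2 := by
    push_cast [xc, yc]; ring
  have hcoe2 : (((xc N * yc N * (xc N + yc N) :
      Subring.center (PowerSeries (PowerSeries (UEnv N))))) :
      PowerSeries (PowerSeries (UEnv N))) = XX (UEnv N) * YY (UEnv N) * (XX (UEnv N) + YY (UEnv N)) := by
    push_cast [xc, yc]; ring
  have hcoe3 : (((xc N * yc N * (yc N - xc N) :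
      Subring.center (PowerSeries (PowerSeries (UEnv N))))) :
      PowerSeries (PowerSeries (UEnv N))) = XX (UEnv N) * YY (UEnv N) * (YY (UEnv N) - XX (UEnv N)) := by
    push_cast [xc, yc]; ring
  have hcoe4 : ((((xc N)^2 * (yc N)^2 : Subring.center (PowerSeries (PowerSeries (UEnv N))))) :
      PowerSeries (PowerSeries (UEnv N))) = XX (UEnv N)^2 * YY (UEnv N)^2 := by
    push_cast [xc, yc]; ring
  rw [← hcoe1, ← hcoe2, ← hcoe3, ← hcoe4, ← csmul, ← csmul, ← csmul, ← csmul]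
  have hu : IsUnit (((2 : Subring.center (PowerSeries (PowerSeries (UEnv N)))) + xc N) *
      (2 + yc N)) := (unit_x N).mul (unit_y N)
  refine (IsUnit.smul_left_cancel hu).mp ?_
  -- the bracket relation, lifted to the double power series ring
  set CC : UEnv N →+* PowerSeries (PowerSeries (UEnv N)) :=
    (C (R := PowerSeries (UEnv N))).comp (C (R := UEnv N)) with hCC
  have h2 := congrArg CC (FF_rel N f hf i j k l)
  simp only [map_sub, map_mul, map_zero,
    apply_ite CC] at h2
  have hbr : Fc N f i j * Fc N f k l - Fc N f k l * Fc N f i j =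
      (if j = k then (1 : Subring.center (PowerSeries (PowerSeries (UEnv N)))) else 0) • Fc N f i l
      - (if i = l then (1 : Subring.center (PowerSeries (PowerSeries (UEnv N)))) else 0) • Fc N f k j
      - (if i = k then (1 : Subring.center (PowerSeries (PowerSeries (UEnv N)))) else 0) • Fc N f j l
      - (if j = l then (1 : Subring.center (PowerSeries (PowerSeries (UEnv N)))) else 0) • Fc N f i k := by
    rw [hsm, hsm, hsm, hsm]
    exact h2
  have hki : Fc N f k i = - Fc N f i k := by
    rw [Fc, Fc, iota_anti N f hf i k, map_neg, map_neg]
  have hlj : Fc N f l j = - Fc N f j l := by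
    rw [Fc, Fc, iota_anti N f hf j l, map_neg, map_neg]
  exact key' (xc N) (yc N)
    (if i = j then 1 else 0) (if k = l then 1 else 0) (if j = k then 1 else 0)
    (if i = l then 1 else 0) (if i = k then 1 else 0) (if j = l then 1 else 0)
    (if i = k then 1 else 0) (if j = l then 1 else 0)
    (Fc N f i j) (Fc N f k l) (Fc N f k j) (Fc N f i l) (Fc N f i k) (Fc N f j l)
    (Fc N f k i) (Fc N f l j)
    (lowX (UEnv N) (sCoeff N f i j)) (lowX (UEnv N) (sCoeff N f k j))
    (lowX (UEnv N) (sCoeff N f i l)) (lowX (UEnv N) (sCoeff N f i k))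
    (lowX (UEnv N) (sCoeff N f l j)) (lowX (UEnv N) (sCoeff N f k i))
    (lowX (UEnv N) (sCoeff N f j l))
    (lowY (UEnv N) (sCoeff N f k l)) (lowY (UEnv N) (sCoeff N f k j))
    (lowY (UEnv N) (sCoeff N f i l)) (lowY (UEnv N) (sCoeff N f j l))
    (lowY (UEnv N) (sCoeff N f k i))
    hki hlj rfl rfl hbr
    (HPX N f i j _ (coe_d _))
    (HPX N f k j _ (by rw [coe_d]; by_cases h : j = k <;> simp [h, Ne.symm, eq_comm]))
    (HPX N f i l _ (coe_d _))
    (HPX N f i k _ (coe_d _))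
    (HPX N f l j _ (by rw [coe_d]; by_cases h : j = l <;> simp [h, Ne.symm, eq_comm]))
    (HPX N f k i _ (by rw [coe_d]; by_cases h : i = k <;> simp [h, Ne.symm, eq_comm]))
    (HPX N f j l _ (coe_d _))
    (HPY N f k l _ (coe_d _))
    (HPY N f k j _ (by rw [coe_d]; by_cases h : j = k <;> simp [h, Ne.symm, eq_comm]))
    (HPY N f i l _ (coe_d _))
    (HPY N f j l _ (coe_d _))
    (HPY N f k i _ (by rw [coe_d]; by_cases h : i = k <;> simp [h, Ne.symm, eq_comm]))


end
end

section
/- Fix an odd integer m ≥ 3 and let A = C[x,y,z]/(xy − z^{2m}) with the Poisson bracket {x,y} = −2m z^{2m−1}, {z,x} = x, {z,y} = −y, graded with deg z = 2 and deg x = deg y = m. Then every graded Poisson automorphism φ of A (i.e., a C-algebra automorphism preserving the grading and the bracket) is of exactly one of the following two forms for a unique t ∈ C^×: either φ(x) = t·x, φ(y) = t^{−1}·y, φ(z) = z; or φ(x) = t·y, φ(y) = t^{−1}·x, φ(z) = −z. Consequently the group of graded Poisson automorphisms of A is isomorphic to C^× ⋊ (Z/2Z). -/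
open MvPolynomial

/-- A Poisson bracket on a commutative `ℂ`-algebra: a `ℂ`-bilinear,
antisymmetric biderivation satisfying the Jacobi identity. -/
def IsPoissonBracket {A : Type*} [CommRing A] [Algebra ℂ A]
    (P : A →ₗ[ℂ] A →ₗ[ℂ] A) : Prop :=
  (∀ a b, P a b = - P b a) ∧
  (∀ a b c, P a (b * c) = P a b * c + b * P a c) ∧
  (∀ a b c, P a (P b c) + P b (P c a) + P c (P a b) = 0)

abbrev R14 : Type := MvPolynomial (Fin 3) ℂ

noncomputable def I14 (m : ℕ) : Ideal R14 :=
  Ideal.span {X 0 * X 1 - X 2 ^ (2 * m)}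

/-- The Kleinian singularity `A = ℂ[x,y,z]/(xy - z^{2m})` of type `A_{2m-1}`. -/
abbrev A14 (m : ℕ) : Type := R14 ⧸ I14 m

noncomputable def xA (m : ℕ) : A14 m := Ideal.Quotient.mk (I14 m) (X 0)
noncomputable def yA (m : ℕ) : A14 m := Ideal.Quotient.mk (I14 m) (X 1)
noncomputable def zA (m : ℕ) : A14 m := Ideal.Quotient.mk (I14 m) (X 2)

/-- The degree-`d` piece of the grading of `A` with `deg x = deg y = m`,
`deg z = 2`. -/
noncomputable def piece14 (m d : ℕ) : Submodule ℂ (A14 m) :=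
  Submodule.map (Ideal.Quotient.mkₐ ℂ (I14 m)).toLinearMap
    (weightedHomogeneousSubmodule ℂ ![m, m, 2] d)

/-- Inversion as a multiplicative automorphism of `ℂˣ`. -/
noncomputable def invAut14 : MulAut ℂˣ := MulEquiv.inv ℂˣ

lemma invAut14_sq : invAut14 * invAut14 = 1 := by
  refine MulEquiv.ext fun u => ?_
  exact inv_inv u

/-- The action of `ℤ/2ℤ` on `ℂˣ` by inversion. -/
noncomputable def psi14 : Multiplicative (ZMod 2) →* MulAut ℂˣ where
  toFun g := if Multiplicative.toAdd g = 0 then 1 else invAut14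
  map_one' := by simp
  map_mul' a b := by
    have hall : ∀ x : ZMod 2, x = 0 ∨ x = 1 := by decide
    have h2 : (1 + 1 : ZMod 2) = 0 := by decide
    have hab : Multiplicative.toAdd (a * b) =
        Multiplicative.toAdd a + Multiplicative.toAdd b := rfl
    rcases hall (Multiplicative.toAdd a) with ha | ha <;>
      rcases hall (Multiplicative.toAdd b) with hb | hb <;>
      simp [hab, ha, hb, h2, invAut14_sq, one_ne_zero]

namespace Aux14

/-- evaluation map x ↦ u^{2m}, y ↦ 1, z ↦ u -/
noncomputable def ev (m : ℕ) : A14 m →ₐ[ℂ] Polynomial ℂ :=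
  Ideal.Quotient.liftₐ (I14 m)
    (aeval ![Polynomial.X ^ (2 * m), 1, Polynomial.X]) (by
      intro a ha
      rw [I14, Ideal.mem_span_singleton] at ha
      obtain ⟨r, rfl⟩ := ha
      rw [map_mul]
      have : (aeval ![Polynomial.X ^ (2 * m), 1, Polynomial.X] : R14 →ₐ[ℂ] Polynomial ℂ)
          (X 0 * X 1 - X 2 ^ (2 * m)) = 0 := by
        simp
      rw [this, zero_mul])

lemma ev_mk (m : ℕ) (p : R14) :
    ev m (Ideal.Quotient.mk (I14 m) p) = aeval ![Polynomial.X ^ (2 * m), 1, Polynomial.X] p := by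
  rw [ev, Ideal.Quotient.liftₐ_apply]
  rfl

lemma ev_x (m : ℕ) : ev m (xA m) = Polynomial.X ^ (2 * m) := by simp [xA, ev_mk]
lemma ev_y (m : ℕ) : ev m (yA m) = 1 := by simp [yA, ev_mk]
lemma ev_z (m : ℕ) : ev m (zA m) = Polynomial.X := by simp [zA, ev_mk]

lemma zA_ne (m : ℕ) : zA m ≠ 0 := by
  intro h
  have := congrArg (ev m) h
  rw [ev_z, map_zero] at this
  exact Polynomial.X_ne_zero this

lemma zpow_ne (m k : ℕ) : (zA m) ^ k ≠ 0 := by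
  intro h
  have := congrArg (ev m) h
  rw [map_pow, ev_z, map_zero] at this
  exact pow_ne_zero k Polynomial.X_ne_zero this

lemma xA_ne (m : ℕ) : xA m ≠ 0 := by
  intro h
  have := congrArg (ev m) h
  rw [ev_x, map_zero] at this
  exact pow_ne_zero _ Polynomial.X_ne_zero this

lemma indep (m : ℕ) (hm : m ≠ 0) {a b : ℂ} (h : a • xA m + b • yA m = 0) : a = 0 ∧ b = 0 := by
  have := congrArg (ev m) h
  rw [map_add, map_smul, map_smul, ev_x, ev_y, map_zero] at this
  constructor
  · have := congrArg (fun p => Polynomial.coeff p (2 * m)) this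
    simpa [Polynomial.coeff_smul, Polynomial.coeff_one, Nat.mul_ne_zero two_ne_zero hm] using this
  · have := congrArg (fun p => Polynomial.coeff p 0) this
    simpa [Polynomial.coeff_smul, Polynomial.coeff_X_pow,
      (Nat.mul_ne_zero two_ne_zero hm).symm] using this

lemma coeff_eq (m : ℕ) (hm : m ≠ 0) {a b a' b' : ℂ}
    (h : a • xA m + b • yA m = a' • xA m + b' • yA m) : a = a' ∧ b = b' := by
  have h0 : (a - a') • xA m + (b - b') • yA m = 0 := by
    rw [sub_smul, sub_smul]
    rw [show a • xA m - a' • xA m + (b • yA m - b' • yA m)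
        = (a • xA m + b • yA m) - (a' • xA m + b' • yA m) by ring, h, sub_self]
  obtain ⟨h1, h2⟩ := indep m hm h0
  constructor <;> [linear_combination h1; linear_combination h2]

end Aux14

namespace Aux14

lemma weight_eq (m : ℕ) (e : Fin 3 →₀ ℕ) :
    (Finsupp.weight ![m, m, 2]) e = e 0 * m + e 1 * m + e 2 * 2 := by
  rw [Finsupp.weight_apply]
  rw [show (e.sum fun i c => c • ![m, m, 2] i) = ∑ i : Fin 3, e i • ![m, m, 2] i from
    Finsupp.sum_fintype _ _ (fun i => by simp)]
  rw [Fin.sum_univ_three]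
  simp [smul_eq_mul]

lemma deg2_support (m : ℕ) (hm : 3 ≤ m) {e : Fin 3 →₀ ℕ}
    (he : (Finsupp.weight ![m, m, 2]) e = 2) : e = Finsupp.single 2 1 := by
  rw [weight_eq] at he
  have h0 : e 0 = 0 := by
    by_contra h
    have h1 : 1 ≤ e 0 := Nat.one_le_iff_ne_zero.mpr h
    have := Nat.mul_le_mul h1 (le_refl m)
    rw [one_mul] at this
    linarith [Nat.zero_le (e 1 * m), Nat.zero_le (e 2 * 2)]
  have h1 : e 1 = 0 := by
    by_contra h
    have h1 : 1 ≤ e 1 := Nat.one_le_iff_ne_zero.mpr h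
    have := Nat.mul_le_mul h1 (le_refl m)
    rw [one_mul] at this
    linarith [Nat.zero_le (e 0 * m), Nat.zero_le (e 2 * 2)]
  have h2 : e 2 = 1 := by rw [h0, h1] at he; omega
  ext i
  fin_cases i <;> simp [Finsupp.single_apply, h0, h1, h2]

lemma degm_support (m : ℕ) (hm : 3 ≤ m) (hodd : Odd m) {e : Fin 3 →₀ ℕ}
    (he : (Finsupp.weight ![m, m, 2]) e = m) :
    e = Finsupp.single 0 1 ∨ e = Finsupp.single 1 1 := by
  rw [weight_eq] at he
  obtain ⟨k, hk⟩ := hodd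
  have h0 : e 0 ≤ 1 := by
    by_contra h
    push_neg at h
    have := Nat.mul_le_mul h (le_refl m)
    linarith [Nat.zero_le (e 1 * m), Nat.zero_le (e 2 * 2)]
  have h1 : e 1 ≤ 1 := by
    by_contra h
    push_neg at h
    have := Nat.mul_le_mul h (le_refl m)
    linarith [Nat.zero_le (e 0 * m), Nat.zero_le (e 2 * 2)]
  interval_cases he0 : e 0 <;> interval_cases he1 : e 1
  · simp at he; omega
  · right
    have h2 : e 2 = 0 := by simp at he; omega
    ext i; fin_cases i <;> simp [Finsupp.single_apply, he0, he1, h2]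
  · left
    have h2 : e 2 = 0 := by simp at he; omega
    ext i; fin_cases i <;> simp [Finsupp.single_apply, he0, he1, h2]
  · exfalso; simp at he; linarith

end Aux14

namespace Aux14

lemma mk_smul (m : ℕ) (c : ℂ) (p : R14) :
    Ideal.Quotient.mk (I14 m) (c • p) = c • Ideal.Quotient.mk (I14 m) p := by
  rw [← Ideal.Quotient.mkₐ_eq_mk ℂ, map_smul]

lemma mem_piece_iff (m d : ℕ) (a : A14 m) :
    a ∈ piece14 m d ↔ ∃ q : R14, q.IsWeightedHomogeneous ![m, m, 2] d ∧
      Ideal.Quotient.mk (I14 m) q = a := by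
  rw [piece14, Submodule.mem_map]
  constructor
  · rintro ⟨q, hq, rfl⟩
    exact ⟨q, hq, rfl⟩
  · rintro ⟨q, hq, rfl⟩
    exact ⟨q, hq, rfl⟩

lemma piece2_classify (m : ℕ) (hm : 3 ≤ m) {a : A14 m} (ha : a ∈ piece14 m 2) :
    ∃ c : ℂ, a = c • zA m := by
  rw [mem_piece_iff] at ha
  obtain ⟨q, hq, rfl⟩ := ha
  refine ⟨q.coeff (Finsupp.single 2 1), ?_⟩
  have hq' : q = q.coeff (Finsupp.single 2 1) • X 2 := by
    classical
    ext e
    rw [coeff_smul, coeff_X']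
    by_cases he : (Finsupp.single 2 1 : Fin 3 →₀ ℕ) = e
    · rw [if_pos he, ← he, smul_eq_mul, mul_one]
    · rw [if_neg he, smul_eq_mul, mul_zero]
      by_contra h
      exact he (deg2_support m hm (hq h)).symm
  conv_lhs => rw [hq']
  rw [mk_smul]
  rfl

lemma piecem_classify (m : ℕ) (hm : 3 ≤ m) (hodd : Odd m) {v : A14 m}
    (hv : v ∈ piece14 m m) : ∃ a b : ℂ, v = a • xA m + b • yA m := by
  rw [mem_piece_iff] at hv
  obtain ⟨q, hq, rfl⟩ := hv
  refine ⟨q.coeff (Finsupp.single 0 1), q.coeff (Finsupp.single 1 1), ?_⟩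
  have hne : (Finsupp.single 0 1 : Fin 3 →₀ ℕ) ≠ Finsupp.single 1 1 := by
    intro h
    have := DFunLike.congr_fun h 0
    simp [Finsupp.single_apply] at this
  have hq' : q = q.coeff (Finsupp.single 0 1) • X 0 + q.coeff (Finsupp.single 1 1) • X 1 := by
    classical
    ext e
    rw [coeff_add, coeff_smul, coeff_smul, coeff_X', coeff_X']
    by_cases h0 : (Finsupp.single 0 1 : Fin 3 →₀ ℕ) = e
    · rw [if_pos h0, if_neg (by rw [← h0]; exact fun h => hne h.symm), ← h0]
      simp
    · rw [if_neg h0]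
      by_cases h1 : (Finsupp.single 1 1 : Fin 3 →₀ ℕ) = e
      · rw [if_pos h1, ← h1]
        simp
      · rw [if_neg h1]
        simp only [smul_eq_mul, mul_zero, add_zero]
        by_contra h
        rcases degm_support m hm hodd (hq h) with h' | h'
        · exact h0 h'.symm
        · exact h1 h'.symm
  conv_lhs => rw [hq']
  rw [map_add, mk_smul, mk_smul]
  rfl

lemma xA_mem (m : ℕ) : xA m ∈ piece14 m m := by
  rw [mem_piece_iff]
  exact ⟨X 0, by simpa using isWeightedHomogeneous_X ℂ ![m, m, 2] 0, rfl⟩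

lemma yA_mem (m : ℕ) : yA m ∈ piece14 m m := by
  rw [mem_piece_iff]
  exact ⟨X 1, by simpa using isWeightedHomogeneous_X ℂ ![m, m, 2] 1, rfl⟩

lemma zA_mem (m : ℕ) : zA m ∈ piece14 m 2 := by
  rw [mem_piece_iff]
  exact ⟨X 2, by simpa using isWeightedHomogeneous_X ℂ ![m, m, 2] 2, rfl⟩

/-- homogeneity is preserved by substitutions sending each variable to a
homogeneous element of the same degree -/
lemma aeval_homog {w : Fin 3 → ℕ} {f : Fin 3 → R14}
    (hf : ∀ i, (f i).IsWeightedHomogeneous w (w i)) {q : R14} {d : ℕ}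
    (hq : q.IsWeightedHomogeneous w d) :
    (aeval f q).IsWeightedHomogeneous w d := by
  classical
  rw [q.as_sum, map_sum]
  apply MvPolynomial.IsWeightedHomogeneous.sum
  intro v hv
  rw [aeval_monomial]
  have hprod : (v.prod fun i k => f i ^ k).IsWeightedHomogeneous w d := by
    have hpow : ∀ i : Fin 3, (f i ^ v i).IsWeightedHomogeneous w (v i * w i) := by
      intro i
      have h1 : (f i ^ v i) = ∏ _j ∈ Finset.range (v i), f i := by
        rw [Finset.prod_const, Finset.card_range]
      rw [h1, show v i * w i = ∑ _j ∈ Finset.range (v i), w i by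
        rw [Finset.sum_const, Finset.card_range, smul_eq_mul]]
      exact MvPolynomial.IsWeightedHomogeneous.prod _ _ _ (fun _ _ => hf i)
    have := MvPolynomial.IsWeightedHomogeneous.prod v.support (fun i => f i ^ v i)
      (fun i => v i * w i) (w := w) (fun i _ => hpow i)
    have hdeg : ∑ i ∈ v.support, v i * w i = d := by
      have := hq (mem_support_iff.mp hv)
      rw [← this, Finsupp.weight_apply, Finsupp.sum]
      exact Finset.sum_congr rfl (fun i _ => (smul_eq_mul (v i) (w i)).symm)
    rw [Finsupp.prod]
    rw [hdeg] at this
    exact this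
  have := (isWeightedHomogeneous_C w (q.coeff v) (σ := Fin 3)).mul hprod
  rw [zero_add] at this
  simpa [algebraMap_eq] using this

end Aux14


namespace Aux14

noncomputable def vars14 (u : ℂˣ) (b : Bool) : Fin 3 → R14 :=
  if b then ![(u : ℂ) • X 0, ((u⁻¹ : ℂˣ) : ℂ) • X 1, X 2]
  else ![(u : ℂ) • X 1, ((u⁻¹ : ℂˣ) : ℂ) • X 0, -X 2]

lemma vars14_homog (m : ℕ) (u : ℂˣ) (b : Bool) :
    ∀ i, (vars14 u b i).IsWeightedHomogeneous ![m, m, 2] (![m, m, 2] i) := by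
  have hX : ∀ (c : ℂ) (i j : Fin 3), ![m, m, 2] i = ![m, m, 2] j →
      (c • (X j : R14)).IsWeightedHomogeneous ![m, m, 2] (![m, m, 2] i) := by
    intro c i j h
    rw [h]
    exact (weightedHomogeneousSubmodule ℂ ![m, m, 2] _).smul_mem c
      (isWeightedHomogeneous_X ℂ _ j)
  have hXneg : ∀ (i j : Fin 3), ![m, m, 2] i = ![m, m, 2] j →
      ((-X j : R14)).IsWeightedHomogeneous ![m, m, 2] (![m, m, 2] i) := by
    intro i j h
    rw [h]
    exact (weightedHomogeneousSubmodule ℂ ![m, m, 2] _).neg_mem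
      (isWeightedHomogeneous_X ℂ _ j)
  cases b <;> intro i <;> fin_cases i <;>
    simp only [vars14, if_true, if_false, Bool.false_eq_true, Matrix.cons_val_zero,
      Matrix.cons_val_one, Matrix.head_cons, Matrix.cons_val_two, Matrix.tail_cons] <;>
    first
      | exact hX _ _ 0 rfl
      | exact hX _ _ 1 rfl
      | exact hX _ 0 1 rfl
      | exact hX _ 1 0 rfl
      | exact hXneg 2 2 rfl
      | exact isWeightedHomogeneous_X ℂ _ 2

lemma aeval_vars14_rel (m : ℕ) (u : ℂˣ) (b : Bool) :
    aeval (vars14 u b) (X 0 * X 1 - X 2 ^ (2 * m) : R14) = X 0 * X 1 - X 2 ^ (2 * m) := by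
  cases b <;>
    simp only [vars14, if_true, if_false, Bool.false_eq_true, map_sub, map_mul, map_pow,
      aeval_X, Matrix.cons_val_zero, Matrix.cons_val_one, Matrix.head_cons, Matrix.cons_val_two,
      Matrix.tail_cons]
  · rw [smul_mul_smul_comm, Units.mul_inv, one_smul, mul_comm (X 1 : R14) (X 0),
      Even.neg_pow ⟨m, (two_mul m)⟩]
  · rw [smul_mul_smul_comm, Units.mul_inv, one_smul]

noncomputable def genAlgHom (m : ℕ) (u : ℂˣ) (b : Bool) : A14 m →ₐ[ℂ] A14 m :=
  Ideal.Quotient.liftₐ (I14 m)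
    ((Ideal.Quotient.mkₐ ℂ (I14 m)).comp (aeval (vars14 u b))) (by
      intro a ha
      rw [I14, Ideal.mem_span_singleton] at ha
      obtain ⟨r, rfl⟩ := ha
      rw [AlgHom.comp_apply, map_mul, aeval_vars14_rel]
      rw [map_mul]
      have : Ideal.Quotient.mkₐ ℂ (I14 m) (X 0 * X 1 - X 2 ^ (2 * m)) = 0 := by
        rw [Ideal.Quotient.mkₐ_eq_mk, Ideal.Quotient.eq_zero_iff_mem]
        exact Ideal.subset_span (Set.mem_singleton _)
      rw [this, zero_mul])

lemma genAlgHom_mk (m : ℕ) (u : ℂˣ) (b : Bool) (p : R14) :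
    genAlgHom m u b (Ideal.Quotient.mk (I14 m) p) =
      Ideal.Quotient.mk (I14 m) (aeval (vars14 u b) p) := by
  rw [genAlgHom, Ideal.Quotient.liftₐ_apply]
  rfl

lemma genAlgHom_x (m : ℕ) (u : ℂˣ) (b : Bool) :
    genAlgHom m u b (xA m) = (u : ℂ) • (if b then xA m else yA m) := by
  cases b <;> rw [xA, genAlgHom_mk] <;>
    simp [vars14, mk_smul, xA, yA]

lemma genAlgHom_y (m : ℕ) (u : ℂˣ) (b : Bool) :
    genAlgHom m u b (yA m) = ((u⁻¹ : ℂˣ) : ℂ) • (if b then yA m else xA m) := by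
  cases b <;> rw [yA, genAlgHom_mk] <;>
    simp [vars14, mk_smul, xA, yA]

lemma genAlgHom_z (m : ℕ) (u : ℂˣ) (b : Bool) :
    genAlgHom m u b (zA m) = (if b then zA m else -zA m) := by
  cases b <;> rw [zA, genAlgHom_mk] <;>
    simp [vars14, zA]

lemma hom_ext {m : ℕ} {B : Type*} [CommRing B] [Algebra ℂ B] {f g : A14 m →ₐ[ℂ] B}
    (hx : f (xA m) = g (xA m)) (hy : f (yA m) = g (yA m)) (hz : f (zA m) = g (zA m)) :
    f = g := by
  have h : f.comp (Ideal.Quotient.mkₐ ℂ (I14 m)) = g.comp (Ideal.Quotient.mkₐ ℂ (I14 m)) := by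
    apply MvPolynomial.algHom_ext
    intro i
    fin_cases i <;>
      simpa only [AlgHom.comp_apply, Ideal.Quotient.mkₐ_eq_mk] using (by assumption : _)
  ext a
  obtain ⟨p, rfl⟩ := Ideal.Quotient.mkₐ_surjective ℂ (I14 m) a
  exact DFunLike.congr_fun h p

lemma equiv_ext {m : ℕ} {f g : A14 m ≃ₐ[ℂ] A14 m}
    (hx : f (xA m) = g (xA m)) (hy : f (yA m) = g (yA m)) (hz : f (zA m) = g (zA m)) :
    f = g := by
  have := hom_ext (f := f.toAlgHom) (g := g.toAlgHom) hx hy hz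
  exact AlgEquiv.ext fun a => DFunLike.congr_fun this a

noncomputable def genEquiv (m : ℕ) (u : ℂˣ) (b : Bool) : A14 m ≃ₐ[ℂ] A14 m :=
  AlgEquiv.ofAlgHom (genAlgHom m u b) (genAlgHom m (if b then u⁻¹ else u) b)
    (by
      cases b <;> apply hom_ext <;>
        simp [genAlgHom_x, genAlgHom_y, genAlgHom_z, map_smul, smul_smul, map_neg]
    )
    (by
      cases b <;> apply hom_ext <;>
        simp [genAlgHom_x, genAlgHom_y, genAlgHom_z, map_smul, smul_smul, map_neg]
    )

lemma genEquiv_apply (m : ℕ) (u : ℂˣ) (b : Bool) (a : A14 m) :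
    genEquiv m u b a = genAlgHom m u b a := rfl

end Aux14


namespace Aux14

lemma adjoin_xyz (m : ℕ) :
    Algebra.adjoin ℂ ({xA m, yA m, zA m} : Set (A14 m)) = ⊤ := by
  rw [eq_top_iff]
  rintro a -
  obtain ⟨p, rfl⟩ := Ideal.Quotient.mkₐ_surjective ℂ (I14 m) a
  have hp : p ∈ Algebra.adjoin ℂ (Set.range (X : Fin 3 → R14)) := by
    rw [MvPolynomial.adjoin_range_X]; trivial
  induction hp using Algebra.adjoin_induction with
  | mem q hq =>
    obtain ⟨i, rfl⟩ := hq
    apply Algebra.subset_adjoin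
    fin_cases i
    · exact Or.inl rfl
    · exact Or.inr (Or.inl rfl)
    · exact Or.inr (Or.inr rfl)
  | algebraMap c =>
    rw [AlgHom.commutes]
    exact Subalgebra.algebraMap_mem _ c
  | add q r _ _ ihq ihr => rw [map_add]; exact add_mem ihq ihr
  | mul q r _ _ ihq ihr => rw [map_mul]; exact mul_mem ihq ihr

lemma psi14_apply (g : Multiplicative (ZMod 2)) (u : ℂˣ) :
    psi14 g u = if Multiplicative.toAdd g = 0 then u else u⁻¹ := by
  rw [psi14]
  simp only [MonoidHom.coe_mk, OneHom.coe_mk, apply_ite (fun (e : MulAut ℂˣ) => e u)]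
  rfl

lemma gen_comp_tt (m : ℕ) (u v : ℂˣ) :
    genEquiv m u true * genEquiv m v true = genEquiv m (u * v) true := by
  apply equiv_ext <;>
    simp [AlgEquiv.mul_apply, genEquiv_apply, genAlgHom_x, genAlgHom_y, genAlgHom_z,
      map_smul, smul_smul, mul_comm]

lemma gen_comp_tf (m : ℕ) (u v : ℂˣ) :
    genEquiv m u true * genEquiv m v false = genEquiv m (v * u⁻¹) false := by
  apply equiv_ext <;>
    simp [AlgEquiv.mul_apply, genEquiv_apply, genAlgHom_x, genAlgHom_y, genAlgHom_z,
      map_smul, smul_smul, mul_comm]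

lemma gen_comp_ft (m : ℕ) (u v : ℂˣ) :
    genEquiv m u false * genEquiv m v true = genEquiv m (u * v) false := by
  apply equiv_ext <;>
    simp [AlgEquiv.mul_apply, genEquiv_apply, genAlgHom_x, genAlgHom_y, genAlgHom_z,
      map_smul, smul_smul, mul_comm, map_neg]

lemma gen_comp_ff (m : ℕ) (u v : ℂˣ) :
    genEquiv m u false * genEquiv m v false = genEquiv m (v * u⁻¹) true := by
  apply equiv_ext <;>
    simp [AlgEquiv.mul_apply, genEquiv_apply, genAlgHom_x, genAlgHom_y, genAlgHom_z,
      map_smul, smul_smul, mul_comm, map_neg]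

noncomputable def Phi (m : ℕ) :
    SemidirectProduct ℂˣ (Multiplicative (ZMod 2)) psi14 →* (A14 m ≃ₐ[ℂ] A14 m) where
  toFun p := if Multiplicative.toAdd p.right = 0 then genEquiv m p.left true
    else genEquiv m p.left⁻¹ false
  map_one' := by
    have h0 : Multiplicative.toAdd (SemidirectProduct.right
        (1 : SemidirectProduct ℂˣ (Multiplicative (ZMod 2)) psi14)) = 0 := by simp
    rw [if_pos h0, SemidirectProduct.one_left]
    apply equiv_ext <;>
      simp [genEquiv_apply, genAlgHom_x, genAlgHom_y, genAlgHom_z]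
  map_mul' p q := by
    have hall : ∀ x : ZMod 2, x = 0 ∨ x = 1 := by decide
    have hpq : Multiplicative.toAdd ((p * q).right) =
        Multiplicative.toAdd p.right + Multiplicative.toAdd q.right := by
      rw [SemidirectProduct.mul_right]; rfl
    have hleft : (p * q).left = p.left * psi14 p.right q.left :=
      SemidirectProduct.mul_left p q
    rcases hall (Multiplicative.toAdd p.right) with hp | hp <;>
      rcases hall (Multiplicative.toAdd q.right) with hq | hq
    · have h1 : Multiplicative.toAdd ((p * q).right) = 0 := by rw [hpq, hp, hq]; rfl
      rw [if_pos h1, if_pos hp, if_pos hq, hleft, psi14_apply, if_pos hp, gen_comp_tt]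
    · have h1 : Multiplicative.toAdd ((p * q).right) ≠ 0 := by rw [hpq, hp, hq]; decide
      rw [if_neg h1, if_pos hp, if_neg (hq ▸ one_ne_zero), hleft, psi14_apply, if_pos hp,
        gen_comp_tf, mul_inv_rev]
    · have h1 : Multiplicative.toAdd ((p * q).right) ≠ 0 := by rw [hpq, hp, hq]; decide
      rw [if_neg h1, if_neg (hp ▸ one_ne_zero), if_pos hq, hleft, psi14_apply, if_neg (hp ▸ one_ne_zero),
        gen_comp_ft, mul_inv_rev, inv_inv, mul_comm]
    · have h1 : Multiplicative.toAdd ((p * q).right) = 0 := by rw [hpq, hp, hq]; decide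
      rw [if_pos h1, if_neg (hp ▸ one_ne_zero), if_neg (hq ▸ one_ne_zero), hleft, psi14_apply,
        if_neg (hp ▸ one_ne_zero), gen_comp_ff, inv_inv, mul_comm]

end Aux14


namespace Aux14

lemma bracket_extend {m : ℕ} (P : A14 m →ₗ[ℂ] A14 m →ₗ[ℂ] A14 m)
    (hP : IsPoissonBracket P) (φ : A14 m ≃ₐ[ℂ] A14 m)
    (h9 : ∀ a ∈ ({xA m, yA m, zA m} : Set (A14 m)),
      ∀ b ∈ ({xA m, yA m, zA m} : Set (A14 m)), φ (P a b) = P (φ a) (φ b)) :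
    ∀ a b, φ (P a b) = P (φ a) (φ b) := by
  obtain ⟨anti, leib2, _⟩ := hP
  have leib1 : ∀ a b c : A14 m, P (a * b) c = P a c * b + a * P b c := by
    intro a b c
    rw [anti (a * b) c, leib2 c a b, anti a c, anti b c]
    ring
  have P1 : ∀ a : A14 m, P a 1 = 0 := by
    intro a
    have h := leib2 a 1 1
    simp only [mul_one, one_mul] at h
    exact (add_eq_left.mp h.symm)
  have Palg : ∀ (a : A14 m) (c : ℂ), P a (algebraMap ℂ (A14 m) c) = 0 := by
    intro a c
    rw [Algebra.algebraMap_eq_smul_one, map_smul, P1, smul_zero]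
  have Palg' : ∀ (a : A14 m) (c : ℂ), P (algebraMap ℂ (A14 m) c) a = 0 := by
    intro a c
    rw [anti, Palg, neg_zero]
  have key : ∀ a, a ∈ Algebra.adjoin ℂ ({xA m, yA m, zA m} : Set (A14 m)) →
      ∀ b, φ (P a b) = P (φ a) (φ b) := by
    intro a ha
    induction ha using Algebra.adjoin_induction with
    | mem u hu =>
      intro b
      have hb : b ∈ Algebra.adjoin ℂ ({xA m, yA m, zA m} : Set (A14 m)) := by
        rw [adjoin_xyz]; trivial
      induction hb using Algebra.adjoin_induction with
      | mem v hv => exact h9 u hu v hv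
      | algebraMap c => rw [Palg, map_zero, AlgEquiv.commutes, Palg]
      | add v w _ _ ihv ihw => rw [map_add (P u), map_add, map_add, map_add (P (φ u)), ihv, ihw]
      | mul v w _ _ ihv ihw =>
        rw [leib2, map_add, map_mul, map_mul, map_mul, leib2, ihv, ihw]
    | algebraMap c => intro b; rw [Palg', map_zero, AlgEquiv.commutes, Palg']
    | add u v _ _ ihu ihv =>
      intro b
      rw [map_add P, LinearMap.add_apply, map_add, map_add φ, map_add P, LinearMap.add_apply,
        ihu, ihv]
    | mul u v _ _ ihu ihv =>
      intro b
      rw [leib1, map_add, map_mul, map_mul, map_mul φ, leib1, ihu, ihv]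
  intro a b
  exact key a (by rw [adjoin_xyz]; trivial) b

end Aux14


namespace Aux14

set_option synthInstance.maxHeartbeats 1000000 in
instance instNZSD (m : ℕ) : NoZeroSMulDivisors ℂ (A14 m) := inferInstance

lemma yA_ne (m : ℕ) : yA m ≠ 0 := by
  intro h
  have := congrArg (ev m) h
  rw [ev_y, map_zero] at this
  exact one_ne_zero this

lemma smul_cancel {m : ℕ} {c d : ℂ} {v : A14 m} (hv : v ≠ 0) (h : c • v = d • v) : c = d := by
  have h0 : (c - d) • v = 0 := by rw [sub_smul, h, sub_self]
  rcases smul_eq_zero.mp h0 with h' | h'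
  · exact sub_eq_zero.mp h'
  · exact absurd h' hv

lemma z_selfneg (m : ℕ) : zA m ≠ -zA m := by
  intro h
  have h2 : (2 : ℂ) • zA m = 0 := by
    rw [two_smul]
    nth_rewrite 2 [h]
    rw [add_neg_cancel]
  rcases smul_eq_zero.mp h2 with h' | h'
  · exact two_ne_zero h'
  · exact zA_ne m h'

lemma gen_graded (m : ℕ) (u : ℂˣ) (b : Bool) (d : ℕ) (a : A14 m)
    (ha : a ∈ piece14 m d) : genEquiv m u b a ∈ piece14 m d := by
  rw [mem_piece_iff] at ha ⊢
  obtain ⟨q, hq, rfl⟩ := ha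
  exact ⟨aeval (vars14 u b) q, aeval_homog (vars14_homog m u b) hq,
    by rw [genEquiv_apply, genAlgHom_mk]⟩

lemma Phi_apply (m : ℕ) (p : SemidirectProduct ℂˣ (Multiplicative (ZMod 2)) psi14) :
    Phi m p = if Multiplicative.toAdd p.right = 0 then genEquiv m p.left true
      else genEquiv m p.left⁻¹ false := rfl

end Aux14


namespace Aux14

set_option maxHeartbeats 1000000 in
lemma gen_poisson (m : ℕ) (hodd21 : Odd (2*m-1))
    (P : A14 m →ₗ[ℂ] A14 m →ₗ[ℂ] A14 m) (hP : IsPoissonBracket P)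
    (hxy : P (xA m) (yA m) = (-(2 * (m : ℂ))) • (zA m) ^ (2 * m - 1))
    (hzx : P (zA m) (xA m) = xA m)
    (hzy : P (zA m) (yA m) = - yA m)
    (u : ℂˣ) (bb : Bool) :
    ∀ s, (s = xA m ∨ s = yA m ∨ s = zA m) → ∀ t, (t = xA m ∨ t = yA m ∨ t = zA m) →
      genEquiv m u bb (P s t) = P (genEquiv m u bb s) (genEquiv m u bb t) := by
  have anti := hP.1
  have Paa : ∀ a : A14 m, P a a = 0 := by
    intro a
    have h := anti a a
    have h2 : (2:ℂ) • P a a = 0 := by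
      rw [two_smul]
      nth_rewrite 2 [h]
      rw [add_neg_cancel]
    rcases smul_eq_zero.mp h2 with h' | h'
    · exact absurd h' two_ne_zero
    · exact h'
  have Pyx : P (yA m) (xA m) = (2*(m:ℂ)) • zA m ^ (2*m-1) := by
    rw [anti, hxy, neg_smul, neg_neg]
  have Pxz : P (xA m) (zA m) = - xA m := by rw [anti, hzx]
  have Pyz : P (yA m) (zA m) = yA m := by rw [anti, hzy, neg_neg]
  have hnegpow : (-(zA m))^(2*m-1) = -((zA m)^(2*m-1)) := Odd.neg_pow hodd21 (zA m)
  have hsmul : ∀ v : A14 m, (u:ℂ) • (((u⁻¹:ℂˣ):ℂ) • v) = v := fun v => by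
    rw [smul_smul, Units.mul_inv, one_smul]
  have hsmul' : ∀ v : A14 m, ((u⁻¹:ℂˣ):ℂ) • ((u:ℂ) • v) = v := fun v => by
    rw [smul_smul, Units.inv_mul, one_smul]
  rintro s (rfl | rfl | rfl) t (rfl | rfl | rfl) <;> cases bb <;>
    simp only [genEquiv_apply, genAlgHom_x, genAlgHom_y, genAlgHom_z, if_true, if_false,
      Bool.false_eq_true, Paa, Pyx, Pxz, Pyz, hxy, hzx, hzy,
      map_zero, map_neg, map_smul, map_pow, LinearMap.smul_apply, LinearMap.neg_apply,
      smul_zero, smul_neg, neg_smul, neg_neg, neg_zero, hnegpow, hsmul, hsmul', one_smul]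

end Aux14


set_option maxHeartbeats 3000000 in
/-- for odd `m ≥ 3`, every graded Poisson automorphism `φ` of the
Kleinian singularity `A = ℂ[x,y,z]/(xy - z^{2m})` (graded with `deg z = 2`,
`deg x = deg y = m`, with Poisson bracket `{x,y} = -2m z^{2m-1}`, `{z,x} = x`,
`{z,y} = -y`) is of exactly one of the two forms, for a unique `t ∈ ℂˣ`:
`x ↦ t x, y ↦ t⁻¹ y, z ↦ z`, or `x ↦ t y, y ↦ t⁻¹ x, z ↦ -z`; consequently the
group of graded Poisson automorphisms of `A` is isomorphic to
`ℂˣ ⋊ (ℤ/2ℤ)` (with `ℤ/2ℤ` acting by inversion). -/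
theorem stmt14 (m : ℕ) (hm : 3 ≤ m) (hodd : Odd m)
    (P : A14 m →ₗ[ℂ] A14 m →ₗ[ℂ] A14 m)
    (hP : IsPoissonBracket P)
    (hxy : P (xA m) (yA m) = (-(2 * (m : ℂ))) • (zA m) ^ (2 * m - 1))
    (hzx : P (zA m) (xA m) = xA m)
    (hzy : P (zA m) (yA m) = - yA m) :
    (∀ φ : A14 m ≃ₐ[ℂ] A14 m,
      (∀ d : ℕ, ∀ a ∈ piece14 m d, φ a ∈ piece14 m d) →
      (∀ a b, φ (P a b) = P (φ a) (φ b)) →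
      ∃! p : ℂˣ × Bool,
        if p.2 = true then
          φ (xA m) = ((p.1 : ℂ)) • xA m ∧
          φ (yA m) = (((p.1⁻¹ : ℂˣ) : ℂ)) • yA m ∧
          φ (zA m) = zA m
        else
          φ (xA m) = ((p.1 : ℂ)) • yA m ∧
          φ (yA m) = (((p.1⁻¹ : ℂˣ) : ℂ)) • xA m ∧
          φ (zA m) = - zA m) ∧
    (∃ Φ : SemidirectProduct ℂˣ (Multiplicative (ZMod 2)) psi14 →*
        (A14 m ≃ₐ[ℂ] A14 m),
      Function.Injective Φ ∧
      ∀ φ : A14 m ≃ₐ[ℂ] A14 m,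
        ((∀ d : ℕ, ∀ a ∈ piece14 m d, φ a ∈ piece14 m d) ∧
          (∀ a b, φ (P a b) = P (φ a) (φ b))) ↔ φ ∈ Set.range Φ) := by
  classical
  have hm0 : m ≠ 0 := by omega
  have h2m : (2 * (m:ℂ)) ≠ 0 := mul_ne_zero two_ne_zero (Nat.cast_ne_zero.mpr hm0)
  have hodd21 : Odd (2*m-1) := ⟨m-1, by omega⟩
  have anti := hP.1
  have Paa : ∀ a : A14 m, P a a = 0 := by
    intro a
    have h := anti a a
    have h2 : (2:ℂ) • P a a = 0 := by
      rw [two_smul]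
      nth_rewrite 2 [h]
      rw [add_neg_cancel]
    rcases smul_eq_zero.mp h2 with h' | h'
    · exact absurd h' two_ne_zero
    · exact h'
  have Pyx : P (yA m) (xA m) = (2*(m:ℂ)) • zA m ^ (2*m-1) := by
    rw [anti, hxy, neg_smul, neg_neg]
  have Pxz : P (xA m) (zA m) = - xA m := by rw [anti, hzx]
  have Pyz : P (yA m) (zA m) = yA m := by rw [anti, hzy, neg_neg]
  have main : ∀ φ : A14 m ≃ₐ[ℂ] A14 m,
      (∀ d : ℕ, ∀ a ∈ piece14 m d, φ a ∈ piece14 m d) →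
      (∀ a b, φ (P a b) = P (φ a) (φ b)) →
      ∃! p : ℂˣ × Bool,
        if p.2 = true then
          φ (xA m) = ((p.1 : ℂ)) • xA m ∧
          φ (yA m) = (((p.1⁻¹ : ℂˣ) : ℂ)) • yA m ∧
          φ (zA m) = zA m
        else
          φ (xA m) = ((p.1 : ℂ)) • yA m ∧
          φ (yA m) = (((p.1⁻¹ : ℂˣ) : ℂ)) • xA m ∧
          φ (zA m) = - zA m := by
    intro φ hgr hbr
    obtain ⟨c, hc⟩ := Aux14.piece2_classify m hm (hgr 2 _ (Aux14.zA_mem m))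
    obtain ⟨a, b, hab⟩ := Aux14.piecem_classify m hm hodd (hgr m _ (Aux14.xA_mem m))
    obtain ⟨a', b', hab'⟩ := Aux14.piecem_classify m hm hodd (hgr m _ (Aux14.yA_mem m))
    have e1 : a = c * a ∧ b = -(c * b) := by
      have h := hbr (zA m) (xA m)
      rw [hzx, hc, hab] at h
      simp only [map_add, map_smul, LinearMap.add_apply, LinearMap.smul_apply, hzx, hzy] at h
      have h' : a • xA m + b • yA m = (c*a) • xA m + (-(c*b)) • yA m := by
        rw [h]; module
      exact Aux14.coeff_eq m hm0 h'
    have e2 : -a' = c * a' ∧ -b' = -(c * b') := by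
      have h := hbr (zA m) (yA m)
      rw [hzy, map_neg, hc, hab'] at h
      simp only [map_add, map_smul, LinearMap.add_apply, LinearMap.smul_apply, hzx, hzy] at h
      have h' : (-a') • xA m + (-b') • yA m = (c*a') • xA m + (-(c*b')) • yA m := by
        rw [show (-a') • xA m + (-b') • yA m = -(a' • xA m + b' • yA m) by module, h]
        module
      exact Aux14.coeff_eq m hm0 h'
    have hdet : a * b' - a' * b = c ^ (2*m-1) := by
      have h := hbr (xA m) (yA m)
      rw [hxy, map_smul, map_pow, hc, smul_pow, hab, hab'] at h
      have hR : P (a • xA m + b • yA m) (a' • xA m + b' • yA m)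
          = ((a*b' - a'*b) * (-(2*(m:ℂ)))) • zA m ^ (2*m-1) := by
        simp only [map_add, map_smul, LinearMap.add_apply, LinearMap.smul_apply,
          hxy, Pyx, Paa]
        module
      rw [hR, smul_smul] at h
      have hs := Aux14.smul_cancel (Aux14.zpow_ne m (2*m-1)) h
      have hswap : (-(2*(m:ℂ))) * (a*b' - a'*b) = (-(2*(m:ℂ))) * c ^ (2*m-1) := by
        linear_combination -hs
      exact (mul_left_cancel₀ (neg_ne_zero.mpr h2m) hswap)
    have hxne : ¬ (φ (xA m) = 0) := fun h =>
      Aux14.xA_ne m (φ.injective (by rw [h, map_zero]))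
    by_cases ha : a = 0
    · -- reflection case
      have hb : b ≠ 0 := by
        intro hb
        exact hxne (by rw [hab, ha, hb, zero_smul, zero_smul, add_zero])
      have hcneg : c = -1 := by
        have h0 : (1 + c) * b = 0 := by linear_combination e1.2
        rcases mul_eq_zero.mp h0 with h' | h'
        · linear_combination h'
        · exact absurd h' hb
      have hb' : b' = 0 := by
        have h0 := e2.2
        rw [hcneg] at h0
        have h1 : (2:ℂ) * b' = 0 := by linear_combination -h0
        rcases mul_eq_zero.mp h1 with h' | h'
        · exact absurd h' two_ne_zero
        · exact h'
      have hba' : b * a' = 1 := by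
        have h1 : -(a'*b) = c^(2*m-1) := by rw [← hdet, ha]; ring
        rw [hcneg, Odd.neg_one_pow hodd21] at h1
        linear_combination -h1
      refine ⟨(⟨b, a', hba', by linear_combination hba'⟩, false), ?_, ?_⟩
      · dsimp only
        rw [if_neg (by simp)]
        refine ⟨?_, ?_, ?_⟩
        · rw [hab, ha, zero_smul, zero_add]
        · rw [hab', hb', zero_smul, add_zero]; rfl
        · rw [hc, hcneg, neg_smul, one_smul]
      · rintro ⟨v, bv⟩ hq
        dsimp only at hq
        cases bv
        · rw [if_neg (by simp)] at hq
          have hv : (v:ℂ) = b := Aux14.smul_cancel (Aux14.yA_ne m)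
            (by rw [← hq.1, hab, ha, zero_smul, zero_add])
          exact Prod.ext (Units.ext hv) rfl
        · rw [if_pos rfl] at hq
          exact absurd (hq.2.2.symm.trans
            (show φ (zA m) = - zA m by rw [hc, hcneg, neg_smul, one_smul]))
            (Aux14.z_selfneg m)
    · -- identity case
      have hc1 : c = 1 := by
        have h0 : (c - 1) * a = 0 := by linear_combination -e1.1
        rcases mul_eq_zero.mp h0 with h' | h'
        · linear_combination h'
        · exact absurd h' ha
      have hb0 : b = 0 := by
        have h0 := e1.2
        rw [hc1] at h0
        have h1 : (2:ℂ) * b = 0 := by linear_combination h0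
        rcases mul_eq_zero.mp h1 with h' | h'
        · exact absurd h' two_ne_zero
        · exact h'
      have ha'0 : a' = 0 := by
        have h0 := e2.1
        rw [hc1] at h0
        have h1 : (2:ℂ) * a' = 0 := by linear_combination -h0
        rcases mul_eq_zero.mp h1 with h' | h'
        · exact absurd h' two_ne_zero
        · exact h'
      have hab'1 : a * b' = 1 := by
        have := hdet
        rw [ha'0, hc1, one_pow] at this
        linear_combination this
      refine ⟨(⟨a, b', hab'1, by linear_combination hab'1⟩, true), ?_, ?_⟩
      · dsimp only
        rw [if_pos rfl]
        refine ⟨?_, ?_, ?_⟩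
        · rw [hab, hb0, zero_smul, add_zero]
        · rw [hab', ha'0, zero_smul, zero_add]; rfl
        · rw [hc, hc1, one_smul]
      · rintro ⟨v, bv⟩ hq
        dsimp only at hq
        cases bv
        · rw [if_neg (by simp)] at hq
          exact absurd ((show φ (zA m) = zA m by rw [hc, hc1, one_smul]).symm.trans hq.2.2)
            (Aux14.z_selfneg m)
        · rw [if_pos rfl] at hq
          have hv : (v:ℂ) = a := Aux14.smul_cancel (Aux14.xA_ne m)
            (by rw [← hq.1, hab, hb0, zero_smul, add_zero])
          exact Prod.ext (Units.ext hv) rfl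
  refine ⟨main, ⟨Aux14.Phi m, ?_, ?_⟩⟩
  · -- injectivity
    rw [injective_iff_map_eq_one]
    intro p hp1
    have hall : ∀ x : ZMod 2, x = 0 ∨ x = 1 := by decide
    rcases hall (Multiplicative.toAdd p.right) with hpr | hpr
    · have h := Aux14.Phi_apply m p
      rw [if_pos hpr, hp1] at h
      have hx : Aux14.genEquiv m p.left true (xA m) = xA m := by rw [← h]; rfl
      rw [Aux14.genEquiv_apply, Aux14.genAlgHom_x] at hx
      simp only [if_true] at hx
      have hl : (p.left : ℂ) = (1:ℂ) :=
        Aux14.smul_cancel (Aux14.xA_ne m) (hx.trans (one_smul ℂ (xA m)).symm)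
      exact SemidirectProduct.ext (Units.ext hl)
        (Multiplicative.toAdd.injective (by simpa using hpr))
    · exfalso
      have h := Aux14.Phi_apply m p
      rw [if_neg (hpr ▸ one_ne_zero), hp1] at h
      have hz : Aux14.genEquiv m p.left⁻¹ false (zA m) = zA m := by rw [← h]; rfl
      rw [Aux14.genEquiv_apply, Aux14.genAlgHom_z] at hz
      simp only [Bool.false_eq_true, if_false] at hz
      exact Aux14.z_selfneg m (hz.symm)
  · -- range characterization
    intro φ
    constructor
    · rintro ⟨hgr, hbr⟩
      obtain ⟨⟨u, bu⟩, hp, -⟩ := main φ hgr hbr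
      cases bu
      · rw [if_neg (by simp)] at hp
        refine ⟨⟨u⁻¹, Multiplicative.ofAdd 1⟩, ?_⟩
        have hcond : ¬ (Multiplicative.toAdd (Multiplicative.ofAdd (1 : ZMod 2)) = 0) := by
          decide
        rw [Aux14.Phi_apply]
        dsimp only
        rw [if_neg hcond, inv_inv]
        refine Aux14.equiv_ext ?_ ?_ ?_ <;>
          rw [Aux14.genEquiv_apply]
        · rw [Aux14.genAlgHom_x, hp.1]; simp
        · rw [Aux14.genAlgHom_y, hp.2.1]; simp
        · rw [Aux14.genAlgHom_z, hp.2.2]; simp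
      · rw [if_pos rfl] at hp
        refine ⟨⟨u, 1⟩, ?_⟩
        have hcond : Multiplicative.toAdd (1 : Multiplicative (ZMod 2)) = 0 := rfl
        rw [Aux14.Phi_apply]
        dsimp only
        rw [if_pos hcond]
        refine Aux14.equiv_ext ?_ ?_ ?_ <;>
          rw [Aux14.genEquiv_apply]
        · rw [Aux14.genAlgHom_x, hp.1]; simp
        · rw [Aux14.genAlgHom_y, hp.2.1]; simp
        · rw [Aux14.genAlgHom_z, hp.2.2]; simp
    · rintro ⟨p, rfl⟩
      constructor
      · intro d a ha
        rw [Aux14.Phi_apply]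
        split_ifs <;> exact Aux14.gen_graded m _ _ d a ha
      · have hall : ∀ x : ZMod 2, x = 0 ∨ x = 1 := by decide
        apply Aux14.bracket_extend P hP
        intro s hs t ht
        simp only [Set.mem_insert_iff, Set.mem_singleton_iff] at hs ht
        rcases hall (Multiplicative.toAdd p.right) with hpr | hpr
        · rw [Aux14.Phi_apply, if_pos hpr]
          exact Aux14.gen_poisson m hodd21 P hP hxy hzx hzy _ _ s hs t ht
        · rw [Aux14.Phi_apply, if_neg (hpr ▸ one_ne_zero)]
          exact Aux14.gen_poisson m hodd21 P hP hxy hzx hzy _ _ s hs t ht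
end
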